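/- arXiv:2508.08000 — 9 statements merged into one kernel-verified Lean document; each statement's English description precedes it below -/
import Mathlib

section
/- Let n ≥ 1 and let W = ⟨g⟩ × ⟨σ⟩ be the Klein four-group acting on the free ℤ-module N_n of rank 4n+4 as specified in the context. Then the first group cohomology H¹(W, N_n) is isomorphic as an abelian group to (ℤ/2ℤ)^{2n}. -/
/-!
STATEMENT 0: For `n ≥ 1`, the Klein four-group `W = ⟨g⟩ × ⟨σ⟩` acts on the free
ℤ-module `N_n` of rank `4n+4` with basis `s, l, l₀, l_∞` and `l_k` for
`k ∈ {±1, …, ±2n}` as specified; then `H¹(W, N_n) ≃ (ℤ/2)^{2n}` as abelian groups.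

The basis is indexed by `Fin 4 ⊕ (Fin (2*n) × Bool)`, where `Sum.inl 0 = s`,
`Sum.inl 1 = l`, `Sum.inl 2 = l₀`, `Sum.inl 3 = l_∞`, and `Sum.inr (j, true)`
(resp. `Sum.inr (j, false)`) is `l_{j+1}` (resp. `l_{-(j+1)}`).
-/

/-- The Klein four-group `W = ⟨g⟩ × ⟨σ⟩`. -/
abbrev KleinW : Type := Multiplicative (ZMod 2) × Multiplicative (ZMod 2)

/-- The generator `g` of the first factor. -/
def gElt : KleinW := (Multiplicative.ofAdd 1, 1)

/-- The generator `σ` of the second factor. -/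
def σElt : KleinW := (1, Multiplicative.ofAdd 1)

/-- Index type for the basis of `N_n`. -/
abbrev NIdx (n : ℕ) : Type := Fin 4 ⊕ (Fin (2 * n) × Bool)

/-- The module `N_n`, free of rank `4n + 4`. -/
abbrev Nmod (n : ℕ) : Type := NIdx n →₀ ℤ

/-- The basis vector `s`. -/
noncomputable def eS (n : ℕ) : Nmod n := Finsupp.single (Sum.inl 0) 1

/-- The basis vector `l`. -/
noncomputable def eL (n : ℕ) : Nmod n := Finsupp.single (Sum.inl 1) 1

/-- The basis vector `l₀`. -/
noncomputable def e0 (n : ℕ) : Nmod n := Finsupp.single (Sum.inl 2) 1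

/-- The basis vector `l_∞`. -/
noncomputable def eInf (n : ℕ) : Nmod n := Finsupp.single (Sum.inl 3) 1

/-- The basis vector `l_{±(j+1)}`; `b = true` corresponds to the positive index. -/
noncomputable def eK (n : ℕ) (j : Fin (2 * n)) (b : Bool) : Nmod n := Finsupp.single (Sum.inr (j, b)) 1

namespace Stmt0Aux

def flipIdx {n : ℕ} : NIdx n → NIdx n
  | .inl k => .inl k
  | .inr (j, b) => .inr (j, !b)

lemma fin4_cases : ∀ k : Fin 4, k = 0 ∨ k = 1 ∨ k = 2 ∨ k = 3 := by decide

variable {n : ℕ} {ρ : Representation ℤ KleinW (Nmod n)}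

section geval
variable (hgS : ρ gElt (eS n) = eS n)
    (hgL : ρ gElt (eL n) = eL n)
    (hg0 : ρ gElt (e0 n) = e0 n)
    (hgInf : ρ gElt (eInf n) = eInf n)
    (hgK : ∀ (j : Fin (2 * n)) (b : Bool), ρ gElt (eK n j b) = eK n j (!b))
include hgS hgL hg0 hgInf hgK

lemma g_single (i : NIdx n) (c : ℤ) :
    ρ gElt (Finsupp.single i c) = Finsupp.single (flipIdx i) c := by
  have h1 : (Finsupp.single i c : Nmod n) = c • Finsupp.single i (1 : ℤ) := by
    simp [Finsupp.smul_single]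
  rw [h1, map_smul]
  rcases i with k | ⟨j, b⟩
  · rcases fin4_cases k with rfl | rfl | rfl | rfl
    · rw [show (Finsupp.single (Sum.inl 0) (1:ℤ) : Nmod n) = eS n from rfl, hgS]
      simp [flipIdx, eS, Finsupp.smul_single]
    · rw [show (Finsupp.single (Sum.inl 1) (1:ℤ) : Nmod n) = eL n from rfl, hgL]
      simp [flipIdx, eL, Finsupp.smul_single]
    · rw [show (Finsupp.single (Sum.inl 2) (1:ℤ) : Nmod n) = e0 n from rfl, hg0]
      simp [flipIdx, e0, Finsupp.smul_single]
    · rw [show (Finsupp.single (Sum.inl 3) (1:ℤ) : Nmod n) = eInf n from rfl, hgInf]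
      simp [flipIdx, eInf, Finsupp.smul_single]
  · rw [show (Finsupp.single (Sum.inr (j, b)) (1:ℤ) : Nmod n) = eK n j b from rfl, hgK]
    simp [flipIdx, eK, Finsupp.smul_single]

lemma g_apply (x : Nmod n) (i : NIdx n) :
    ρ gElt x i = x (flipIdx i) := by
  induction x using Finsupp.induction_linear with
  | zero => simp
  | add f g hf hg => simp [hf, hg]
  | single i' c =>
      rw [g_single hgS hgL hg0 hgInf hgK]
      rcases i with k | ⟨j, b⟩ <;> rcases i' with k' | ⟨j', b'⟩ <;>
        simp [flipIdx, Finsupp.single_apply]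

end geval

noncomputable def σB {n : ℕ} : NIdx n → Nmod n
  | .inl k =>
      if k = 0 then
        eS n + (2 * n + 1) • eL n
          - (∑ j : Fin (2 * n), (eK n j true + eK n j false)) - e0 n - eInf n
      else if k = 1 then eL n
      else if k = 2 then eL n - e0 n
      else eL n - eInf n
  | .inr (j, b) => eL n - eK n j (!b)

section seval
variable (hsL : ρ σElt (eL n) = eL n)
    (hsK : ∀ (j : Fin (2 * n)) (b : Bool), ρ σElt (eK n j b) = eL n - eK n j (!b))
    (hs0 : ρ σElt (e0 n) = eL n - e0 n)
    (hsInf : ρ σElt (eInf n) = eL n - eInf n)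
    (hsS : ρ σElt (eS n) =
      eS n + (2 * n + 1) • eL n
        - (∑ j : Fin (2 * n), (eK n j true + eK n j false)) - e0 n - eInf n)
include hsL hsK hs0 hsInf hsS



lemma s_single (i : NIdx n) (c : ℤ) :
    ρ σElt (Finsupp.single i c) = c • σB i := by
  have h1 : (Finsupp.single i c : Nmod n) = c • Finsupp.single i (1 : ℤ) := by
    simp [Finsupp.smul_single]
  rw [h1, map_smul]
  congr 1
  rcases i with k | ⟨j, b⟩
  · rcases fin4_cases k with rfl | rfl | rfl | rfl
    · rw [show (Finsupp.single (Sum.inl 0) (1:ℤ) : Nmod n) = eS n from rfl, hsS]; rfl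
    · rw [show (Finsupp.single (Sum.inl 1) (1:ℤ) : Nmod n) = eL n from rfl, hsL]; rfl
    · rw [show (Finsupp.single (Sum.inl 2) (1:ℤ) : Nmod n) = e0 n from rfl, hs0]; rfl
    · rw [show (Finsupp.single (Sum.inl 3) (1:ℤ) : Nmod n) = eInf n from rfl, hsInf]; rfl
  · rw [show (Finsupp.single (Sum.inr (j, b)) (1:ℤ) : Nmod n) = eK n j b from rfl, hsK]; rfl

lemma s_apply_s (x : Nmod n) : ρ σElt x (Sum.inl 0) = x (Sum.inl 0) := by
  induction x using Finsupp.induction_linear with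
  | zero => simp
  | add f g hf hg => simp [hf, hg]
  | single i c =>
      rw [s_single hsL hsK hs0 hsInf hsS]
      rcases i with k | ⟨j, b⟩
      · rcases fin4_cases k with rfl | rfl | rfl | rfl <;>
          simp [σB, eS, eL, e0, eInf, eK, Finsupp.single_apply, Finsupp.finset_sum_apply]
      · simp [σB, eS, eL, e0, eInf, eK, Finsupp.single_apply]

lemma s_apply_l (x : Nmod n) : ρ σElt x (Sum.inl 1) =
    (2 * (n : ℤ) + 1) * x (Sum.inl 0) + x (Sum.inl 1) + x (Sum.inl 2) + x (Sum.inl 3)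
      + ∑ j : Fin (2 * n), (x (Sum.inr (j, true)) + x (Sum.inr (j, false))) := by
  induction x using Finsupp.induction_linear with
  | zero => simp
  | add f g hf hg =>
      simp only [map_add, Finsupp.add_apply, hf, hg, Finset.sum_add_distrib]
      ring
  | single i c =>
      rw [s_single hsL hsK hs0 hsInf hsS]
      rcases i with k | ⟨j, b⟩
      · rcases fin4_cases k with rfl | rfl | rfl | rfl <;>
          simp [σB, eS, eL, e0, eInf, eK, Finsupp.single_apply,
            Finsupp.finset_sum_apply] <;> push_cast <;> ring
      · cases b <;>
          simp [σB, eS, eL, e0, eInf, eK, Finsupp.single_apply, Prod.ext_iff]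

lemma s_apply_0 (x : Nmod n) :
    ρ σElt x (Sum.inl 2) = -x (Sum.inl 0) - x (Sum.inl 2) := by
  induction x using Finsupp.induction_linear with
  | zero => simp
  | add f g hf hg => simp only [map_add, Finsupp.add_apply, hf, hg]; ring
  | single i c =>
      rw [s_single hsL hsK hs0 hsInf hsS]
      rcases i with k | ⟨j, b⟩
      · rcases fin4_cases k with rfl | rfl | rfl | rfl <;>
          simp [σB, eS, eL, e0, eInf, eK, Finsupp.single_apply,
            Finsupp.finset_sum_apply]
      · simp [σB, eS, eL, e0, eInf, eK, Finsupp.single_apply]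

lemma s_apply_inf (x : Nmod n) :
    ρ σElt x (Sum.inl 3) = -x (Sum.inl 0) - x (Sum.inl 3) := by
  induction x using Finsupp.induction_linear with
  | zero => simp
  | add f g hf hg => simp only [map_add, Finsupp.add_apply, hf, hg]; ring
  | single i c =>
      rw [s_single hsL hsK hs0 hsInf hsS]
      rcases i with k | ⟨j, b⟩
      · rcases fin4_cases k with rfl | rfl | rfl | rfl <;>
          simp [σB, eS, eL, e0, eInf, eK, Finsupp.single_apply,
            Finsupp.finset_sum_apply]
      · simp [σB, eS, eL, e0, eInf, eK, Finsupp.single_apply]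

lemma s_apply_k (x : Nmod n) (j : Fin (2 * n)) (b : Bool) :
    ρ σElt x (Sum.inr (j, b)) = -x (Sum.inl 0) - x (Sum.inr (j, !b)) := by
  induction x using Finsupp.induction_linear with
  | zero => simp
  | add f g hf hg => simp only [map_add, Finsupp.add_apply, hf, hg]; ring
  | single i c =>
      rw [s_single hsL hsK hs0 hsInf hsS]
      rcases i with k | ⟨j', b'⟩
      · rcases fin4_cases k with rfl | rfl | rfl | rfl <;> cases b <;>
          simp [σB, eS, eL, e0, eInf, eK, Finsupp.single_apply,
            Finsupp.finset_sum_apply, Prod.ext_iff]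
      · cases b <;> cases b' <;>
          simp [σB, eS, eL, e0, eInf, eK, Finsupp.single_apply, Prod.ext_iff]


end seval

end Stmt0Aux

theorem stmt0 (n : ℕ) (hn : 1 ≤ n)
    (ρ : Representation ℤ KleinW (Nmod n))
    -- the action of g: fixes s, l, l₀, l_∞, swaps l_k ↔ l_{-k}
    (hgS : ρ gElt (eS n) = eS n)
    (hgL : ρ gElt (eL n) = eL n)
    (hg0 : ρ gElt (e0 n) = e0 n)
    (hgInf : ρ gElt (eInf n) = eInf n)
    (hgK : ∀ (j : Fin (2 * n)) (b : Bool), ρ gElt (eK n j b) = eK n j (!b))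
    -- the action of σ
    (hsL : ρ σElt (eL n) = eL n)
    (hsK : ∀ (j : Fin (2 * n)) (b : Bool), ρ σElt (eK n j b) = eL n - eK n j (!b))
    (hs0 : ρ σElt (e0 n) = eL n - e0 n)
    (hsInf : ρ σElt (eInf n) = eL n - eInf n)
    (hsS : ρ σElt (eS n) =
      eS n + (2 * n + 1) • eL n
        - (∑ j : Fin (2 * n), (eK n j true + eK n j false)) - e0 n - eInf n) :
    Nonempty (groupCohomology.H1 (Rep.of ρ) ≃+ (Fin (2 * n) → ZMod 2)) := by
  classical
  open Stmt0Aux groupCohomology in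
  set A : Rep ℤ KleinW := Rep.of ρ with hA
  -- abbreviations for eval lemmas
  have gapp : ∀ (x : Nmod n) (i : NIdx n), ρ gElt x i = x (flipIdx i) :=
    g_apply hgS hgL hg0 hgInf hgK
  have sapp_s : ∀ x : Nmod n, ρ σElt x (Sum.inl 0) = x (Sum.inl 0) :=
    s_apply_s hsL hsK hs0 hsInf hsS
  have sapp_l : ∀ x : Nmod n, ρ σElt x (Sum.inl 1) =
      (2 * (n : ℤ) + 1) * x (Sum.inl 0) + x (Sum.inl 1) + x (Sum.inl 2) + x (Sum.inl 3)
        + ∑ j : Fin (2 * n), (x (Sum.inr (j, true)) + x (Sum.inr (j, false))) :=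
    s_apply_l hsL hsK hs0 hsInf hsS
  have sapp_0 : ∀ x : Nmod n, ρ σElt x (Sum.inl 2) = -x (Sum.inl 0) - x (Sum.inl 2) :=
    s_apply_0 hsL hsK hs0 hsInf hsS
  have sapp_inf : ∀ x : Nmod n, ρ σElt x (Sum.inl 3) = -x (Sum.inl 0) - x (Sum.inl 3) :=
    s_apply_inf hsL hsK hs0 hsInf hsS
  have sapp_k : ∀ (x : Nmod n) (j : Fin (2 * n)) (b : Bool),
      ρ σElt x (Sum.inr (j, b)) = -x (Sum.inl 0) - x (Sum.inr (j, !b)) :=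
    s_apply_k hsL hsK hs0 hsInf hsS
  -- the invariant map
  let ψ₀ : (KleinW → Nmod n) →ₗ[ℤ] (Fin (2 * n) → ZMod 2) :=
    { toFun := fun f j =>
        ((f gElt (Sum.inr (j, true)) + f σElt (Sum.inr (j, true)) + f σElt (Sum.inl 2) : ℤ)
          : ZMod 2)
      map_add' := by
        intro f g
        funext j
        simp only [Pi.add_apply, Finsupp.add_apply]
        push_cast
        ring
      map_smul' := by
        intro c f
        funext j
        simp only [Pi.smul_apply, Finsupp.smul_apply, smul_eq_mul, RingHom.id_apply, zsmul_eq_mul]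
        push_cast
        ring }
  let ψ : cocycles₁ A →ₗ[ℤ] (Fin (2 * n) → ZMod 2) := ψ₀.comp (cocycles₁ A).subtype
  have hgg : gElt * gElt = 1 := by decide
  have hss : σElt * σElt = 1 := by decide
  have hgs : σElt * gElt = gElt * σElt := by decide
  have henum : ∀ w : KleinW, w = 1 ∨ w = gElt ∨ w = σElt ∨ w = gElt * σElt := by decide
  have mem_cob : ∀ f : cocycles₁ A,
      (⇑f ∈ coboundaries₁ A ↔ ∃ x : A, ∀ g, A.ρ g x - x = f g) := by
    intro f
    simp only [coboundaries₁, LinearMap.mem_range, funext_iff, d₀₁_hom_apply]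
  have hker : LinearMap.ker (H1π A).hom = LinearMap.ker ψ := by
    ext f
    change H1π A f = 0 ↔ ψ f = 0
    rw [H1π_eq_zero_iff, mem_cob]
    constructor
    · rintro ⟨x, hx⟩
      let xv : Nmod n := x
      let fv : KleinW → Nmod n := fun w => f w
      have hx' : ∀ w : KleinW, ρ w xv - xv = fv w := hx
      funext j
      show ((fv gElt (Sum.inr (j, true)) + fv σElt (Sum.inr (j, true))
          + fv σElt (Sum.inl 2) : ℤ) : ZMod 2) = 0
      rw [← hx' gElt, ← hx' σElt]
      simp only [Finsupp.sub_apply, gapp, sapp_k, sapp_0]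
      rw [ZMod.intCast_zmod_eq_zero_iff_dvd]
      refine ⟨-xv (Sum.inr (j, true)) - xv (Sum.inl 0) - xv (Sum.inl 2), ?_⟩
      simp only [flipIdx]
      push_cast
      ring
    · intro hf
      let fv : KleinW → Nmod n := fun w => f w
      have hcoc : ∀ w₁ w₂ : KleinW, fv (w₁ * w₂) = ρ w₁ (fv w₂) + fv w₁ :=
        (groupCohomology.mem_cocycles₁_iff (A := A) f.1).1 f.2
      set a : Nmod n := fv gElt with ha
      set b : Nmod n := fv σElt with hb
      have hone : fv 1 = 0 := groupCohomology.cocycles₁_map_one f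
      have h1 : ρ gElt a + a = 0 := by rw [← hcoc gElt gElt, hgg, hone]
      have h2 : ρ σElt b + b = 0 := by rw [← hcoc σElt σElt, hss, hone]
      -- coordinates of a
      have ha_c : ∀ i : NIdx n, a (flipIdx i) + a i = 0 := by
        intro i
        have : (ρ gElt a + a) i = (0 : Nmod n) i := by rw [h1]
        simpa [Finsupp.add_apply, gapp] using this
      have ha_s : a (Sum.inl 0) = 0 := by have := ha_c (Sum.inl 0); simp [flipIdx] at this; omega
      have ha_l : a (Sum.inl 1) = 0 := by have := ha_c (Sum.inl 1); simp [flipIdx] at this; omega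
      have ha_0 : a (Sum.inl 2) = 0 := by have := ha_c (Sum.inl 2); simp [flipIdx] at this; omega
      have ha_inf : a (Sum.inl 3) = 0 := by
        have := ha_c (Sum.inl 3); simp [flipIdx] at this; omega
      have ha_k : ∀ j : Fin (2 * n), a (Sum.inr (j, false)) = -a (Sum.inr (j, true)) := by
        intro j
        have := ha_c (Sum.inr (j, true)); simp [flipIdx] at this; omega
      -- coordinates of b
      have hb_s : b (Sum.inl 0) = 0 := by
        have : (ρ σElt b + b) (Sum.inl 0) = (0 : Nmod n) (Sum.inl 0) := by rw [h2]
        simp [Finsupp.add_apply, sapp_s] at this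
        omega
      have hb_k : ∀ j : Fin (2 * n), b (Sum.inr (j, false)) = b (Sum.inr (j, true)) := by
        intro j
        have : (ρ σElt b + b) (Sum.inr (j, true)) = (0 : Nmod n) (Sum.inr (j, true)) := by
          rw [h2]
        simp [Finsupp.add_apply, sapp_k, hb_s] at this
        omega
      have hsum : b (Sum.inl 2) + b (Sum.inl 3)
          = -2 * b (Sum.inl 1) - 2 * ∑ j : Fin (2 * n), b (Sum.inr (j, true)) := by
        have hh : (ρ σElt b + b) (Sum.inl 1) = (0 : Nmod n) (Sum.inl 1) := by rw [h2]
        simp only [Finsupp.add_apply, sapp_l, hb_s, Finsupp.coe_zero, Pi.zero_apply] at hh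
        have hs2 : ∑ j : Fin (2 * n), (b (Sum.inr (j, true)) + b (Sum.inr (j, false)))
            = 2 * ∑ j : Fin (2 * n), b (Sum.inr (j, true)) := by
          rw [Finset.mul_sum]
          refine Finset.sum_congr rfl fun j _ => ?_
          rw [hb_k j]; ring
        rw [hs2] at hh
        linarith
      -- divisibility from ψ f = 0
      have hdvd : ∀ j : Fin (2 * n),
          (2 : ℤ) ∣ (a (Sum.inr (j, true)) + b (Sum.inr (j, true)) + b (Sum.inl 2)) := by
        intro j
        have h := congrFun hf j
        have h2 := (ZMod.intCast_zmod_eq_zero_iff_dvd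
          (a (Sum.inr (j, true)) + b (Sum.inr (j, true)) + b (Sum.inl 2)) 2).1 h
        exact_mod_cast h2
      -- construct the coboundary witness
      set b0 : ℤ := b (Sum.inl 2) with hb0
      set xinf : ℤ := b (Sum.inl 1) + ∑ j : Fin (2 * n), b (Sum.inr (j, true)) with hxinf
      set xm : Fin (2 * n) → ℤ :=
        fun j => (a (Sum.inr (j, true)) - b (Sum.inr (j, true)) - b0) / 2 with hxmdef
      set xp : Fin (2 * n) → ℤ := fun j => xm j - a (Sum.inr (j, true)) with hxpdef
      have hxm : ∀ j, 2 * xm j = a (Sum.inr (j, true)) - b (Sum.inr (j, true)) - b0 := by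
        intro j
        obtain ⟨m, hm⟩ := hdvd j
        exact Int.mul_ediv_cancel' ⟨m - b (Sum.inr (j, true)) - b0, by linarith⟩
      set x : Nmod n := b0 • eS n + (-b0) • e0 n + xinf • eInf n
          + ∑ j : Fin (2 * n), (xp j • eK n j true + xm j • eK n j false) with hxdef
      -- coordinates of x
      have hx_s : x (Sum.inl 0) = b0 := by
        simp [hxdef, eS, e0, eInf, eK, Finsupp.single_apply, Finsupp.finset_sum_apply]
      have hx_l : x (Sum.inl 1) = 0 := by
        simp [hxdef, eS, e0, eInf, eK, Finsupp.single_apply, Finsupp.finset_sum_apply]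
      have hx_0 : x (Sum.inl 2) = -b0 := by
        simp [hxdef, eS, e0, eInf, eK, Finsupp.single_apply, Finsupp.finset_sum_apply]
      have hx_inf : x (Sum.inl 3) = xinf := by
        simp [hxdef, eS, e0, eInf, eK, Finsupp.single_apply, Finsupp.finset_sum_apply]
      have hx_kt : ∀ j, x (Sum.inr (j, true)) = xp j := by
        intro j
        simp [hxdef, eS, e0, eInf, eK, Finsupp.single_apply, Finsupp.finset_sum_apply,
          Prod.ext_iff]
      have hx_kf : ∀ j, x (Sum.inr (j, false)) = xm j := by
        intro j
        simp [hxdef, eS, e0, eInf, eK, Finsupp.single_apply, Finsupp.finset_sum_apply,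
          Prod.ext_iff]
      -- the two generator identities
      have hwg : ρ gElt x - x = a := by
        ext i
        rw [Finsupp.sub_apply, gapp]
        rcases i with k | ⟨j, t⟩
        · rcases Stmt0Aux.fin4_cases k with rfl | rfl | rfl | rfl <;>
            simp [flipIdx, ha_s, ha_l, ha_0, ha_inf]
        · cases t
          · simp only [flipIdx, Bool.not_false, Bool.not_true]
            rw [hx_kt, hx_kf, ha_k]
            simp [hxpdef]
          · simp only [flipIdx, Bool.not_false, Bool.not_true]
            rw [hx_kt, hx_kf]
            simp [hxpdef]
      have hws : ρ σElt x - x = b := by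
        ext i
        rcases i with k | ⟨j, t⟩
        · rcases Stmt0Aux.fin4_cases k with rfl | rfl | rfl | rfl
          · rw [Finsupp.sub_apply, sapp_s, hx_s]; omega
          · rw [Finsupp.sub_apply, sapp_l, hx_s, hx_l, hx_0, hx_inf]
            have hptm : ∀ j : Fin (2 * n),
                x (Sum.inr (j, true)) + x (Sum.inr (j, false))
                  = -(b (Sum.inr (j, true))) - b0 := by
              intro j
              rw [hx_kt, hx_kf]
              have := hxm j
              simp only [hxpdef]
              linarith
            rw [Finset.sum_congr rfl fun j _ => hptm j, Finset.sum_sub_distrib,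
              Finset.sum_neg_distrib, Finset.sum_const, Finset.card_univ, Fintype.card_fin,
              hxinf]
            push_cast
            ring
          · rw [Finsupp.sub_apply, sapp_0, hx_s, hx_0]; omega
          · rw [Finsupp.sub_apply, sapp_inf, hx_s, hx_inf, hxinf]
            linarith [hsum]
        · rw [Finsupp.sub_apply, sapp_k, hx_s]
          cases t
          · simp only [Bool.not_false]
            rw [hx_kt, hx_kf, hb_k j]
            have := hxm j
            simp only [hxpdef]
            linarith
          · simp only [Bool.not_true]
            rw [hx_kt, hx_kf]
            have := hxm j
            simp only [hxpdef]
            linarith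
      refine ⟨x, ?_⟩
      have final : ∀ w : KleinW, ρ w x - x = fv w := by
        intro w
        rcases henum w with rfl | rfl | rfl | rfl
        · rw [hone, map_one]
          simp
        · exact hwg
        · exact hws
        · have heq : ρ (gElt * σElt) x - x = ρ gElt (ρ σElt x - x) + (ρ gElt x - x) := by
            rw [map_mul]
            simp [Module.End.mul_apply, map_sub]
          rw [heq, hws, hwg, hcoc gElt σElt]
      exact final
  have hggs : gElt * (gElt * σElt) = σElt := by decide
  have hsgs : σElt * (gElt * σElt) = gElt := by decide
  have hgsg : (gElt * σElt) * gElt = σElt := by decide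
  have hgss : (gElt * σElt) * σElt = gElt := by decide
  have hgsgs : (gElt * σElt) * (gElt * σElt) = 1 := by decide
  have hsurj : Function.Surjective ψ := by
    intro v
    set av : Nmod n := ∑ j : Fin (2 * n), ((v j).val : ℤ) • (eK n j true - eK n j false)
      with havdef
    have hav_g : ρ gElt av = -av := by
      rw [havdef, map_sum, ← Finset.sum_neg_distrib]
      refine Finset.sum_congr rfl fun j _ => ?_
      rw [map_smul, map_sub, hgK, hgK]
      simp only [Bool.not_true, Bool.not_false]
      rw [← smul_neg]
      congr 1
      abel
    have hav_s : ρ σElt av = av := by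
      rw [havdef, map_sum]
      refine Finset.sum_congr rfl fun j _ => ?_
      rw [map_smul, map_sub, hsK, hsK]
      simp only [Bool.not_true, Bool.not_false]
      congr 1
      abel
    have hav_gs : ρ (gElt * σElt) av = -av := by
      rw [map_mul, Module.End.mul_apply, hav_s, hav_g]
    set f0 : KleinW → Nmod n := fun w => if w.1 = 1 then 0 else av with hf0def
    have hf1 : f0 1 = 0 := if_pos rfl
    have hfg : f0 gElt = av := if_neg (by decide)
    have hfs : f0 σElt = 0 := if_pos rfl
    have hfgs : f0 (gElt * σElt) = av := if_neg (by decide)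
    have hmem : f0 ∈ groupCohomology.cocycles₁ A := by
      rw [groupCohomology.mem_cocycles₁_iff]
      show ∀ w₁ w₂ : KleinW, f0 (w₁ * w₂) = ρ w₁ (f0 w₂) + f0 w₁
      intro w₁ w₂
      rcases henum w₁ with rfl | rfl | rfl | rfl <;> rcases henum w₂ with rfl | rfl | rfl | rfl <;>
        simp only [one_mul, mul_one, hgg, hss, hgs, hggs, hsgs, hgsg, hgss, hgsgs,
          hf1, hfg, hfs, hfgs, map_zero, map_one, Module.End.one_apply,
          hav_g, hav_s, hav_gs] <;>
        abel
    refine ⟨⟨f0, hmem⟩, ?_⟩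
    funext j
    show ((f0 gElt (Sum.inr (j, true)) + f0 σElt (Sum.inr (j, true))
        + f0 σElt (Sum.inl 2) : ℤ) : ZMod 2) = v j
    rw [hfg, hfs]
    have hav_coord : av (Sum.inr (j, true)) = ((v j).val : ℤ) := by
      rw [havdef, Finsupp.finset_sum_apply]
      simp [eK, Finsupp.single_apply, Prod.ext_iff]
    rw [hav_coord]
    simp only [Finsupp.coe_zero, Pi.zero_apply, add_zero]
    exact_mod_cast ZMod.natCast_rightInverse (v j)
  have hπs : Function.Surjective (H1π A).hom := by
    have := (ModuleCat.epi_iff_surjective (H1π A)).1 inferInstance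
    exact this
  exact ⟨((LinearMap.quotKerEquivOfSurjective (H1π A).hom hπs).symm.trans
      ((Submodule.quotEquivOfEq _ _ hker).trans
      (ψ.quotKerEquivOfSurjective hsurj))).toAddEquiv⟩
end

section
/- Let n ≥ 1 and let W = ⟨g⟩ × ⟨σ⟩ act on N_n as specified in the context. Then the submodule of σ-invariants N_n^{⟨σ⟩} is a free ℤ-module of rank 2n+2 with basis consisting of the elements s̃ = 2s − Σ_{k=1}^{2n}(l_k + l_{−k}) − l₀ − l_∞, l̃ = l, and l̃_k = l_k − l_{−k} for k = 1, …, 2n; moreover g fixes s̃ and l̃ and sends each l̃_k to −l̃_k. -/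
/-- The element `s̃ = 2s − Σ_{k=1}^{2n}(l_k + l_{−k}) − l₀ − l_∞`. -/
noncomputable def tS (n : ℕ) : Nmod n :=
  2 • eS n - (∑ j : Fin (2 * n), (eK n j true + eK n j false)) - e0 n - eInf n

/-- The element `l̃ = l`. -/
noncomputable def tL (n : ℕ) : Nmod n := eL n

/-- The element `l̃_{j+1} = l_{j+1} − l_{−(j+1)}`. -/
noncomputable def tK (n : ℕ) (j : Fin (2 * n)) : Nmod n := eK n j true - eK n j false

/-- The submodule of `σ`-invariants `N_n^{⟨σ⟩}`. -/
noncomputable def sigmaInv (n : ℕ) (ρ : Representation ℤ KleinW (Nmod n)) :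
    Submodule ℤ (Nmod n) :=
  LinearMap.eqLocus (ρ σElt) LinearMap.id

theorem stmt1 (n : ℕ) (hn : 1 ≤ n)
    (ρ : Representation ℤ KleinW (Nmod n))
    -- the action of g: fixes s, l, l₀, l_∞, swaps l_k ↔ l_{-k}
    (hgS : ρ gElt (eS n) = eS n)
    (hgL : ρ gElt (eL n) = eL n)
    (hg0 : ρ gElt (e0 n) = e0 n)
    (hgInf : ρ gElt (eInf n) = eInf n)
    (hgK : ∀ (j : Fin (2 * n)) (b : Bool), ρ gElt (eK n j b) = eK n j (!b))
    -- the action of σ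
    (hsL : ρ σElt (eL n) = eL n)
    (hsK : ∀ (j : Fin (2 * n)) (b : Bool), ρ σElt (eK n j b) = eL n - eK n j (!b))
    (hs0 : ρ σElt (e0 n) = eL n - e0 n)
    (hsInf : ρ σElt (eInf n) = eL n - eInf n)
    (hsS : ρ σElt (eS n) =
      eS n + (2 * n + 1) • eL n
        - (∑ j : Fin (2 * n), (eK n j true + eK n j false)) - e0 n - eInf n)  :
    -- the elements s̃, l̃, l̃_k are σ-invariant
    (tS n ∈ sigmaInv n ρ ∧ tL n ∈ sigmaInv n ρ ∧ ∀ j, tK n j ∈ sigmaInv n ρ) ∧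
    -- and they form a ℤ-basis of the σ-invariants (which is hence free of rank 2n+2)
    (∃ b : Module.Basis (Fin 2 ⊕ Fin (2 * n)) ℤ (sigmaInv n ρ),
      ((b (Sum.inl 0) : Nmod n) = tS n ∧ (b (Sum.inl 1) : Nmod n) = tL n ∧
        ∀ j, (b (Sum.inr j) : Nmod n) = tK n j)) ∧
    -- g fixes s̃ and l̃ and sends each l̃_k to −l̃_k
    (ρ gElt (tS n) = tS n ∧ ρ gElt (tL n) = tL n ∧ ∀ j, ρ gElt (tK n j) = -(tK n j)) := by
  -- σ-invariance of the distinguished elements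
  have hmS : ρ σElt (tS n) = tS n := by
    simp only [tS, map_sub, map_nsmul, map_sum, map_add, hsS, hs0, hsInf, hsK,
      Bool.not_true, Bool.not_false]
    rw [show (∑ j : Fin (2*n), ((eL n - eK n j false) + (eL n - eK n j true)))
        = (2*n) • (2 • eL n) - ∑ j : Fin (2*n), (eK n j true + eK n j false) from ?_]
    · rw [smul_smul]
      module
    · rw [show (∑ j : Fin (2*n), ((eL n - eK n j false) + (eL n - eK n j true)))
          = ∑ j : Fin (2*n), (2 • eL n - (eK n j true + eK n j false)) from
        Finset.sum_congr rfl fun j _ => by module]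
      rw [Finset.sum_sub_distrib, Finset.sum_const, Finset.card_univ, Fintype.card_fin]
  have hmL : ρ σElt (tL n) = tL n := hsL
  have hmK : ∀ j, ρ σElt (tK n j) = tK n j := by
    intro j
    simp only [tK, map_sub, hsK, Bool.not_true, Bool.not_false]
    abel
  have memS : tS n ∈ sigmaInv n ρ := hmS
  have memL : tL n ∈ sigmaInv n ρ := hmL
  have memK : ∀ j, tK n j ∈ sigmaInv n ρ := fun j => hmK j
  refine ⟨⟨memS, memL, memK⟩, ?_, ?_, ?_, ?_⟩
  · -- the basis
    set f : Fin 2 ⊕ Fin (2*n) → Nmod n := Sum.elim ![tS n, tL n] (tK n) with hf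
    have hfS : f (Sum.inl 0) = tS n := rfl
    have hfL : f (Sum.inl 1) = tL n := rfl
    have hfK : ∀ j, f (Sum.inr j) = tK n j := fun j => rfl
    have hli : LinearIndependent ℤ f := by
      rw [Fintype.linearIndependent_iff]
      intro g hg
      rw [Fintype.sum_sum_type] at hg
      simp only [hf, Sum.elim_inl, Sum.elim_inr, Fin.sum_univ_two, Matrix.cons_val_zero,
        Matrix.cons_val_one, Matrix.head_cons] at hg
      have h0 := congrArg (fun v : Nmod n => v (Sum.inl 0)) hg
      have h1 := congrArg (fun v : Nmod n => v (Sum.inl 1)) hg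
      have hj := fun (j : Fin (2*n)) => congrArg (fun v : Nmod n => v (Sum.inr (j, true))) hg
      simp [tS, tL, tK, eS, eL, e0, eInf, eK, Finsupp.single_apply,
        Finsupp.finset_sum_apply, Prod.ext_iff, Fintype.sum_prod_type, Fintype.sum_bool,
        Finset.sum_ite_eq] at h0 h1 hj
      rintro (m | j)
      · fin_cases m
        · simpa using h0
        · simpa using h1
      · have := hj j
        omega
    have hspan : Submodule.span ℤ (Set.range f) = sigmaInv n ρ := by
      apply le_antisymm
      · rw [Submodule.span_le]
        rintro _ ⟨i, rfl⟩
        rcases i with m | j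
        · fin_cases m
          · exact memS
          · exact memL
        · exact memK j
      · intro x hx
        have hσ : ρ σElt x = x := hx
        have hexp : x (Sum.inl 0) • ρ σElt (eS n) + x (Sum.inl 1) • ρ σElt (eL n)
            + x (Sum.inl 2) • ρ σElt (e0 n) + x (Sum.inl 3) • ρ σElt (eInf n)
            + ∑ p : Fin (2*n) × Bool, x (Sum.inr p) • ρ σElt (eK n p.1 p.2) = x := by
          conv_rhs => rw [← hσ]
          conv_rhs =>
            rw [show x = ∑ i : NIdx n, Finsupp.single i (x i) by
              conv_lhs => rw [← Finsupp.sum_single x]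
              exact Finsupp.sum_fintype _ _ fun i => Finsupp.single_zero i]
          rw [map_sum, Fintype.sum_sum_type, Fin.sum_univ_four]
          simp only [show ∀ (i : NIdx n), Finsupp.single i (x i) = x i • Finsupp.single i (1:ℤ)
              from fun i => (Finsupp.smul_single_one i (x i)).symm, map_smul]
          rfl
        rw [hsS, hsL, hs0, hsInf] at hexp
        simp only [hsK] at hexp
        have r2 := congrArg (fun v : Nmod n => v (Sum.inl 2)) hexp
        simp [eS, eL, e0, eInf, eK, Finsupp.single_apply, Finsupp.finset_sum_apply] at r2
        have r3 := congrArg (fun v : Nmod n => v (Sum.inl 3)) hexp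
        simp [eS, eL, e0, eInf, eK, Finsupp.single_apply, Finsupp.finset_sum_apply] at r3
        have rK := fun (j : Fin (2*n)) =>
          congrArg (fun v : Nmod n => v (Sum.inr (j, true))) hexp
        simp [eS, eL, e0, eInf, eK, Finsupp.single_apply, Finsupp.finset_sum_apply,
          Prod.ext_iff, Fintype.sum_prod_type, Fintype.sum_bool, Finset.sum_ite_eq] at rK
        have hxeq : x = (-(x (Sum.inl 2))) • tS n + (x (Sum.inl 1)) • tL n
            + ∑ j : Fin (2*n), (x (Sum.inr (j, true)) - x (Sum.inl 2)) • tK n j := by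
          ext idx
          rcases idx with m | ⟨j, b⟩
          · fin_cases m
            · simp [tS, tL, tK, eS, eL, e0, eInf, eK, Finsupp.single_apply,
                Finsupp.finset_sum_apply, Prod.ext_iff, Fintype.sum_prod_type,
                Fintype.sum_bool, Finset.sum_ite_eq]
              omega
            · simp [tS, tL, tK, eS, eL, e0, eInf, eK, Finsupp.single_apply,
                Finsupp.finset_sum_apply, Prod.ext_iff, Fintype.sum_prod_type,
                Fintype.sum_bool, Finset.sum_ite_eq]
            · simp [tS, tL, tK, eS, eL, e0, eInf, eK, Finsupp.single_apply,
                Finsupp.finset_sum_apply, Prod.ext_iff, Fintype.sum_prod_type,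
                Fintype.sum_bool, Finset.sum_ite_eq]
            · simp [tS, tL, tK, eS, eL, e0, eInf, eK, Finsupp.single_apply,
                Finsupp.finset_sum_apply, Prod.ext_iff, Fintype.sum_prod_type,
                Fintype.sum_bool, Finset.sum_ite_eq]
              show x (Sum.inl 3) = x (Sum.inl 2)
              omega
          · cases b
            · simp [tS, tL, tK, eS, eL, e0, eInf, eK, Finsupp.single_apply,
                Finsupp.finset_sum_apply, Prod.ext_iff, Fintype.sum_prod_type,
                Fintype.sum_bool, Finset.sum_ite_eq]
              have := rK j
              omega
            · simp [tS, tL, tK, eS, eL, e0, eInf, eK, Finsupp.single_apply,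
                Finsupp.finset_sum_apply, Prod.ext_iff, Fintype.sum_prod_type,
                Fintype.sum_bool, Finset.sum_ite_eq]
        rw [hxeq]
        refine Submodule.add_mem _ (Submodule.add_mem _ ?_ ?_) ?_
        · exact Submodule.smul_mem _ _ (Submodule.subset_span ⟨Sum.inl 0, hfS⟩)
        · exact Submodule.smul_mem _ _ (Submodule.subset_span ⟨Sum.inl 1, hfL⟩)
        · exact Submodule.sum_mem _ fun j _ =>
            Submodule.smul_mem _ _ (Submodule.subset_span ⟨Sum.inr j, hfK j⟩)
    refine ⟨(Module.Basis.span hli).map (LinearEquiv.ofEq _ _ hspan), ?_, ?_, ?_⟩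
    · rw [Module.Basis.map_apply]
      rw [LinearEquiv.coe_ofEq_apply, Module.Basis.span_apply]
      exact hfS
    · rw [Module.Basis.map_apply]
      rw [LinearEquiv.coe_ofEq_apply, Module.Basis.span_apply]
      exact hfL
    · intro j
      rw [Module.Basis.map_apply]
      rw [LinearEquiv.coe_ofEq_apply, Module.Basis.span_apply]
      exact hfK j
  · -- g fixes s̃
    simp only [tS, map_sub, map_nsmul, map_sum, map_add, hgS, hg0, hgInf, hgK,
      Bool.not_true, Bool.not_false]
    rw [show (∑ j : Fin (2*n), (eK n j false + eK n j true))
        = ∑ j : Fin (2*n), (eK n j true + eK n j false) from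
      Finset.sum_congr rfl fun j _ => add_comm _ _]
  · exact hgL
  · intro j
    simp only [tK, map_sub, hgK, Bool.not_true, Bool.not_false]
    abel
end

section
/- Let n ≥ 1 and let W = ⟨g⟩ × ⟨σ⟩ act on N_n as specified in the context. Then N_n is not a stably permutation W-module: there do not exist finite W-sets S₁, S₂ and an isomorphism of W-representations N_n ⊕ ℤ[S₁] ≅ ℤ[S₂]. -/
private lemma anti_cobdy {S : Type} (f : S → S) (hf : ∀ s, f (f s) = s) :
    ∀ (N : ℕ) (z : S →₀ ℤ), z.support.card ≤ N → (∀ t, z (f t) = - z t) →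
      ∃ w : S →₀ ℤ, z = Finsupp.mapDomain f w - w := by
  classical
  have hinj : Function.Injective f := fun a b h => by rw [← hf a, h, hf]
  intro N
  induction N with
  | zero =>
    intro z hc _
    have : z = 0 := by
      rwa [Nat.le_zero, Finset.card_eq_zero, Finsupp.support_eq_empty] at hc
    exact ⟨0, by simp [this]⟩
  | succ N ih =>
    intro z hc hz
    by_cases h0 : z = 0
    · exact ⟨0, by simp [h0]⟩
    obtain ⟨s, hs⟩ : ∃ s, z s ≠ 0 := by
      by_contra h; push_neg at h; exact h0 (Finsupp.ext fun a => h a)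
    set c := z s with hcdef
    have hfs : z (f s) = -c := hz s
    have hfsne : f s ≠ s := by
      intro h
      rw [h] at hfs; omega
    set z' : S →₀ ℤ := z - Finsupp.single s c + Finsupp.single (f s) c with hz'def
    have hz'app : ∀ t, z' t = z t - (Finsupp.single s c) t + (Finsupp.single (f s) c) t := by
      intro t; rw [hz'def]; simp [Finsupp.sub_apply, Finsupp.add_apply]
    have hz'anti : ∀ t, z' (f t) = - z' t := by
      intro t
      have h1 : (Finsupp.single s c) (f t) = (Finsupp.single (f s) c) t := by
        simp only [Finsupp.single_apply]
        by_cases h : s = f t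
        · rw [if_pos h, if_pos (by rw [h, hf])]
        · rw [if_neg h, if_neg (fun hh => h (by rw [← hh, hf]))]
      have h2 : (Finsupp.single (f s) c) (f t) = (Finsupp.single s c) t := by
        simp only [Finsupp.single_apply]
        by_cases h : s = t
        · rw [if_pos (by rw [h]), if_pos h]
        · rw [if_neg (fun hh => h (hinj hh)), if_neg h]
      rw [hz'app, hz'app, hz t, h1, h2]; ring
    have hsub : z'.support ⊆ z.support.erase s := by
      intro t ht
      by_contra hmem
      apply Finsupp.mem_support_iff.mp ht
      rw [Finset.mem_erase] at hmem
      push_neg at hmem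
      by_cases hts : t = s
      · rw [hz'app, hts, Finsupp.single_apply, if_pos rfl,
          Finsupp.single_apply, if_neg hfsne]
        omega
      · have hzt : z t = 0 := Finsupp.notMem_support_iff.mp (hmem hts)
        have htfs : t ≠ f s := by
          intro h; rw [h] at hzt; omega
        rw [hz'app, hzt, Finsupp.single_apply, if_neg (fun h => hts h.symm),
          Finsupp.single_apply, if_neg (fun h => htfs h.symm)]
        ring
    have hcard : z'.support.card ≤ N := by
      have h1 : (z.support.erase s).card < z.support.card :=
        Finset.card_erase_lt_of_mem (Finsupp.mem_support_iff.mpr hs)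
      have h2 := Finset.card_le_card hsub
      omega
    obtain ⟨w, hw⟩ := ih z' hcard hz'anti
    refine ⟨w + Finsupp.single (f s) c, ?_⟩
    rw [Finsupp.mapDomain_add, Finsupp.mapDomain_single, hf]
    have : z = z' + Finsupp.single s c - Finsupp.single (f s) c := by
      rw [hz'def]; abel
    rw [this, hw]; abel

theorem stmt2 (n : ℕ) (hn : 1 ≤ n)
    (ρ : Representation ℤ KleinW (Nmod n))
    -- the action of g: fixes s, l, l₀, l_∞, swaps l_k ↔ l_{-k}
    (hgS : ρ gElt (eS n) = eS n)
    (hgL : ρ gElt (eL n) = eL n)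
    (hg0 : ρ gElt (e0 n) = e0 n)
    (hgInf : ρ gElt (eInf n) = eInf n)
    (hgK : ∀ (j : Fin (2 * n)) (b : Bool), ρ gElt (eK n j b) = eK n j (!b))
    -- the action of σ
    (hsL : ρ σElt (eL n) = eL n)
    (hsK : ∀ (j : Fin (2 * n)) (b : Bool), ρ σElt (eK n j b) = eL n - eK n j (!b))
    (hs0 : ρ σElt (e0 n) = eL n - e0 n)
    (hsInf : ρ σElt (eInf n) = eL n - eInf n)
    (hsS : ρ σElt (eS n) =
      eS n + (2 * n + 1) • eL n
        - (∑ j : Fin (2 * n), (eK n j true + eK n j false)) - e0 n - eInf n)  :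
    ¬ ∃ (S₁ S₂ : Type) (_ : Fintype S₁) (_ : Fintype S₂)
        (m₁ : MulAction KleinW S₁) (m₂ : MulAction KleinW S₂)
        (e : (Nmod n × (S₁ →₀ ℤ)) ≃ₗ[ℤ] (S₂ →₀ ℤ)),
        ∀ (w : KleinW) (x : Nmod n) (y : S₁ →₀ ℤ),
          e (ρ w x, ((@Representation.ofMulAction ℤ _ KleinW _ S₁ m₁) w (MonoidAlgebra.ofCoeff y)).coeff)
            = ((@Representation.ofMulAction ℤ _ KleinW _ S₂ m₂) w (MonoidAlgebra.ofCoeff (e (x, y)))).coeff := by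
  classical
  rintro ⟨S₁, S₂, _, _, m₁, m₂, e, he⟩
  have hn0 : 0 < 2 * n := by omega
  have hn2 : 1 < 2 * n := by omega
  set τ : KleinW := gElt * σElt with hτdef
  have hττ : τ * τ = 1 := by decide
  have hmul : ∀ v, ρ τ v = ρ gElt (ρ σElt v) := by
    intro v; rw [hτdef, map_mul]; rfl
  -- action of τ on the basis
  have hτL : ρ τ (eL n) = eL n := by rw [hmul, hsL, hgL]
  have hτK : ∀ j b, ρ τ (eK n j b) = eL n - eK n j b := by
    intro j b
    rw [hmul, hsK, map_sub, hgL, hgK, Bool.not_not]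
  have hτ0 : ρ τ (e0 n) = eL n - e0 n := by
    rw [hmul, hs0, map_sub, hgL, hg0]
  have hτInf : ρ τ (eInf n) = eL n - eInf n := by
    rw [hmul, hsInf, map_sub, hgL, hgInf]
  have hτS : ρ τ (eS n) = eS n + (2 * n + 1) • eL n
      - (∑ j : Fin (2 * n), (eK n j true + eK n j false)) - e0 n - eInf n := by
    rw [hmul, hsS, map_sub, map_sub, map_sub, map_add, map_nsmul, map_sum,
      hgS, hgL, hg0, hgInf]
    have hsum : ∑ j : Fin (2 * n), ρ gElt (eK n j true + eK n j false)
        = ∑ j : Fin (2 * n), (eK n j true + eK n j false) := by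
      refine Finset.sum_congr rfl fun j _ => ?_
      rw [map_add, hgK, hgK, Bool.not_true, Bool.not_false]
      exact add_comm _ _
    rw [hsum]
  -- the special element x
  set j0 : Fin (2 * n) := ⟨0, hn0⟩ with hj0
  set j1 : Fin (2 * n) := ⟨1, hn2⟩ with hj1
  set x : Nmod n := eK n j0 true - eK n j1 true with hx
  have hτx : ρ τ x = -x := by
    rw [hx, map_sub, hτK, hτK]; abel
  -- its image z in the permutation module
  set z : S₂ →₀ ℤ := e (x, 0) with hzdef
  have hz : ((Representation.ofMulAction ℤ KleinW S₂) τ (MonoidAlgebra.ofCoeff z)).coeff = -z := by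
    have h1 := he τ x 0
    have h0 : ((Representation.ofMulAction ℤ KleinW S₁) τ
        (MonoidAlgebra.ofCoeff (0 : S₁ →₀ ℤ))).coeff = 0 := by simp
    rw [h0, hτx] at h1
    have h2 : ((-x : Nmod n), (0 : S₁ →₀ ℤ)) = -(x, (0 : S₁ →₀ ℤ)) := by
      simp [Prod.ext_iff]
    rw [h2, map_neg] at h1
    rw [hzdef, ← h1]
  -- anti-invariance pointwise
  have hinv : ∀ s : S₂, τ • τ • s = s := by
    intro s; rw [← mul_smul, hττ, one_smul]
  have hanti : ∀ t : S₂, z (τ • t) = - z t := by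
    intro t
    have hz' : Finsupp.mapDomain (fun s : S₂ => τ • s) z = -z := hz
    have h1 := Finsupp.mapDomain_apply (MulAction.injective τ) z (τ • t)
    rw [hz', Finsupp.neg_apply, hinv] at h1
    omega
  -- z is a coboundary in the permutation module
  obtain ⟨w, hw⟩ := anti_cobdy (fun s : S₂ => τ • s) hinv z.support.card z le_rfl hanti
  -- pull back through e
  set a : Nmod n := (e.symm w).1 with ha
  set b : S₁ →₀ ℤ := (e.symm w).2 with hb
  have hab : e (a, b) = w := by
    rw [ha, hb]
    exact e.apply_symm_apply w
  have h2 := he τ a b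
  rw [hab] at h2
  have hmap : ((Representation.ofMulAction ℤ KleinW S₂) τ (MonoidAlgebra.ofCoeff w)).coeff
      = Finsupp.mapDomain (fun s : S₂ => τ • s) w := by
    rw [Representation.ofMulAction_def]
    rfl
  have hzsub : z = e ((ρ τ a - a,
      ((Representation.ofMulAction ℤ KleinW S₁) τ (MonoidAlgebra.ofCoeff b)).coeff - b)) := by
    have hpair : (ρ τ a - a, ((Representation.ofMulAction ℤ KleinW S₁) τ (MonoidAlgebra.ofCoeff b)).coeff - b)
        = (ρ τ a, ((Representation.ofMulAction ℤ KleinW S₁) τ (MonoidAlgebra.ofCoeff b)).coeff) - (a, b) := by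
      simp [Prod.ext_iff]
    rw [hpair, map_sub, h2, hab]
    rw [hw, hmap]
  have hxa : x = ρ τ a - a := by
    have heq := hzdef.symm.trans hzsub
    have h3 := e.injective heq
    exact (Prod.ext_iff.mp h3).1
  -- the parity functional
  set i1 : NIdx n := Sum.inr (j0, true) with hi1
  set i2 : NIdx n := Sum.inl 2 with hi2
  set F : Nmod n →ₗ[ℤ] ZMod 2 :=
    (Int.castAddHom (ZMod 2)).toIntLinearMap ∘ₗ (Finsupp.lapply i1 + Finsupp.lapply i2) with hF
  have hFval : ∀ v : Nmod n, F v = ((v i1 + v i2 : ℤ) : ZMod 2) := fun v => rfl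
  -- values of F on basis vectors
  have hFS : F (eS n) = 0 := by rw [hFval]; simp [eS, hi1, hi2, Finsupp.single_apply]
  have hFL : F (eL n) = 0 := by rw [hFval]; simp [eL, hi1, hi2, Finsupp.single_apply]
  have hF0v : F (e0 n) = 1 := by rw [hFval]; simp [e0, hi1, hi2, Finsupp.single_apply]
  have hFInf : F (eInf n) = 0 := by rw [hFval]; simp [eInf, hi1, hi2, Finsupp.single_apply]
  have hFK : ∀ j b', F (eK n j b') = if j = j0 ∧ b' = true then 1 else 0 := by
    intro j b'
    rw [hFval]
    simp only [eK, hi1, hi2, Finsupp.single_apply]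
    by_cases h : j = j0 ∧ b' = true
    · rw [if_pos h]
      simp [h.1, h.2]
    · rw [if_neg h]
      have hne : (Sum.inr (j0, true) : NIdx n) ≠ Sum.inr (j, b') := by
        intro hh
        injection hh with hh'
        exact h ⟨(congrArg Prod.fst hh').symm, (congrArg Prod.snd hh').symm⟩
      simp [hne]
      intro hj
      rcases Bool.eq_false_or_eq_true b' with hb | hb
      · exact absurd ⟨hj, hb⟩ h
      · exact hb
  -- F kills all coboundaries ρ τ m - m
  have hbasis : ∀ c : NIdx n, F (ρ τ (Finsupp.single c 1) - Finsupp.single c 1) = 0 := by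
    intro c
    rcases c with i | ⟨j, b'⟩
    · fin_cases i
      · -- s
        show F (ρ τ (eS n) - eS n) = 0
        rw [hτS]
        rw [map_sub, map_sub, map_sub, map_sub, map_add, map_nsmul, map_sum, hFS, hFL, hF0v,
          hFInf]
        have hsum : ∑ j : Fin (2 * n), F (eK n j true + eK n j false) = 1 := by
          have hterm : ∀ j : Fin (2 * n), F (eK n j true + eK n j false)
              = if j = j0 then (1 : ZMod 2) else 0 := by
            intro j
            rw [map_add, hFK, hFK]
            by_cases h : j = j0 <;> simp [h]
          rw [Finset.sum_congr rfl fun j _ => hterm j, Finset.sum_ite_eq' Finset.univ j0]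
          simp
        rw [hsum, smul_zero]
        decide
      · -- l
        show F (ρ τ (eL n) - eL n) = 0
        rw [hτL]
        simp
      · -- l0
        show F (ρ τ (e0 n) - e0 n) = 0
        rw [hτ0]
        rw [map_sub, map_sub, hFL, hF0v]
        decide
      · -- linf
        show F (ρ τ (eInf n) - eInf n) = 0
        rw [hτInf]
        rw [map_sub, map_sub, hFL, hFInf]
        decide
    · show F (ρ τ (eK n j b') - eK n j b') = 0
      rw [hτK, map_sub, map_sub, hFL, hFK]
      by_cases h : j = j0 ∧ b' = true
      · simp only [if_pos h]; decide
      · simp only [if_neg h]; decide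
  have hFcob : F (ρ τ a - a) = 0 := by
    have hzero : F ∘ₗ (ρ τ - LinearMap.id) = 0 := by
      apply Finsupp.lhom_ext
      intro c r
      have hsingle : (Finsupp.single c r : Nmod n) = r • Finsupp.single c 1 := by
        rw [Finsupp.smul_single, smul_eq_mul, mul_one]
      have hcomp : (F ∘ₗ (ρ τ - LinearMap.id)) (Finsupp.single c r)
          = r • F (ρ τ (Finsupp.single c 1) - Finsupp.single c 1) := by
        rw [hsingle, map_smul]
        congr 1
      rw [hcomp, hbasis c]
      simp
    have hz2 := LinearMap.ext_iff.mp hzero a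
    simpa [LinearMap.sub_apply] using hz2
  have hFx : F x = 1 := by
    rw [hx, map_sub, hFK, hFK]
    have hne : j1 ≠ j0 := by
      intro h
      have := congrArg Fin.val h
      simp [hj0, hj1] at this
    simp [hne]
  rw [hxa, hFcob] at hFx
  exact one_ne_zero hFx.symm
end

section
/- Let n, m ≥ 1 with n ≠ m, and let W = ℤ/2 × ℤ/2 act on N_n and N_m as specified in the context. Then the W-modules N_n and N_m are not similar: there do not exist finite W-sets S, S' and an isomorphism of W-representations N_n ⊕ ℤ[S] ≅ N_m ⊕ ℤ[S']. -/
set_option maxHeartbeats 1000000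
set_option synthInstance.maxHeartbeats 1000000

section AuxLemmas

noncomputable def permRep (S : Type) [MulAction KleinW S] (w : KleinW) :
    (S →₀ ℤ) →ₗ[ℤ] (S →₀ ℤ) :=
  (MonoidAlgebra.coeffLinearEquiv ℤ).toLinearMap ∘ₗ
    (Representation.ofMulAction ℤ KleinW S w) ∘ₗ (MonoidAlgebra.coeffLinearEquiv ℤ).symm.toLinearMap

lemma permRep_apply {S : Type} [MulAction KleinW S] (w : KleinW) (f : S →₀ ℤ) (s : S) :
    permRep S w f s = f (w⁻¹ • s) := by
  have h : permRep S w f = Finsupp.mapDomain (w • ·) f := rfl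
  rw [h]
  conv_lhs => rw [show s = w • (w⁻¹ • s) by simp]
  exact Finsupp.mapDomain_apply (MulAction.injective w) f _


lemma tau_sq : (gElt * σElt) * (gElt * σElt) = 1 := by decide

lemma tau_inv : (gElt * σElt)⁻¹ = gElt * σElt := inv_eq_of_mul_eq_one_right tau_sq

lemma perm_ker {S : Type} [Fintype S] [MulAction KleinW S]
    (y : S →₀ ℤ)
    (hy : permRep S (gElt * σElt) y + y = 0) :
    ∃ z : S →₀ ℤ, permRep S (gElt * σElt) z - z = y := by
  classical
  set τ : KleinW := gElt * σElt with hτ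
  have hτs : ∀ s : S, τ • τ • s = s := by
    intro s; rw [smul_smul, tau_sq, one_smul]
  have hrel : ∀ s : S, y (τ • s) + y s = 0 := by
    intro s
    have h := DFunLike.congr_fun hy s
    rw [Finsupp.add_apply, permRep_apply, tau_inv] at h
    simpa using h
  let ord : S → ℕ := fun s => (Fintype.equivFin S s : ℕ)
  have hordinj : Function.Injective ord := by
    intro a b h
    exact (Fintype.equivFin S).injective (Fin.val_injective h)
  refine ⟨Finsupp.equivFunOnFinite.symm
    (fun s => if ord s < ord (τ • s) then -(y s) else 0), ?_⟩
  ext s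
  have happ : ∀ (f : S →₀ ℤ) (s : S),
      (permRep S τ f) s = f (τ • s) := by
    intro f s; rw [permRep_apply, tau_inv]
  rw [Finsupp.sub_apply, happ]
  simp only [Finsupp.coe_equivFunOnFinite_symm]
  rcases lt_trichotomy (ord s) (ord (τ • s)) with h | h | h
  · rw [if_pos h, if_neg (by rw [hτs s]; omega)]
    ring
  · have hfix : τ • s = s := hordinj h.symm
    rw [hfix]
    have := hrel s
    rw [hfix] at this
    simp only [lt_self_iff_false, if_false]
    omega
  · rw [hτs s, if_pos h, if_neg (by omega)]
    have := hrel s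
    linarith

noncomputable def QInv {R M : Type} [CommRing R] [AddCommGroup M] [Module R M]
    (t : M →ₗ[R] M) : ℕ :=
  Nat.card ((LinearMap.ker (1 + t)).map (LinearMap.range (t - 1)).mkQ)



lemma card_quot_congr {R M M' : Type} [CommRing R] [AddCommGroup M] [Module R M]
    [AddCommGroup M'] [Module R M']
    (t : M →ₗ[R] M) (t' : M' →ₗ[R] M') (e : M ≃ₗ[R] M')
    (hc : ∀ x, e (t x) = t' (e x)) :
    QInv t = QInv t' := by
  unfold QInv
  have hmapR : (LinearMap.range (t - 1)).map (e : M →ₗ[R] M') = LinearMap.range (t' - 1) := by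
    ext x
    simp only [Submodule.mem_map, LinearMap.mem_range, LinearMap.sub_apply,
      Module.End.one_apply, LinearEquiv.coe_coe]
    constructor
    · rintro ⟨a, ⟨u, hu⟩, rfl⟩
      exact ⟨e u, by rw [← hu, map_sub, hc]⟩
    · rintro ⟨u, hu⟩
      exact ⟨t (e.symm u) - e.symm u, ⟨e.symm u, rfl⟩,
        by rw [map_sub, hc, e.apply_symm_apply, hu]⟩
  let eQ := Submodule.Quotient.equiv _ _ e hmapR
  have hmapQ : (((LinearMap.ker (1 + t)).map (LinearMap.range (t - 1)).mkQ).map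
        (eQ : _ →ₗ[R] _))
      = (LinearMap.ker (1 + t')).map (LinearMap.range (t' - 1)).mkQ := by
    ext x
    simp only [Submodule.mem_map, LinearMap.mem_ker, LinearMap.add_apply, Module.End.one_apply]
    constructor
    · rintro ⟨q, ⟨a, ha, rfl⟩, rfl⟩
      refine ⟨e a, ?_, ?_⟩
      · rw [← hc, ← map_add, ha, map_zero]
      · show eQ (Submodule.Quotient.mk a) = _
        simp [eQ, Submodule.Quotient.equiv, Submodule.mapQ_apply]
    · rintro ⟨b, hb, rfl⟩
      refine ⟨Submodule.Quotient.mk (e.symm b), ⟨e.symm b, ?_, rfl⟩, ?_⟩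
      · apply e.injective
        rw [map_add, map_zero, e.apply_symm_apply, hc, e.apply_symm_apply, hb]
      · show eQ (Submodule.Quotient.mk (e.symm b)) = _
        simp [eQ, Submodule.Quotient.equiv, Submodule.mapQ_apply]
  exact Nat.card_congr ((LinearEquiv.ofSubmodules eQ _ _ hmapQ)).toEquiv

section Count

variable (n : ℕ) (S : Type) [Fintype S] [MulAction KleinW S]
    (ρn : Representation ℤ KleinW (Nmod n))

lemma NQuot_card
    (hgSN : ρn gElt (eS n) = eS n)
    (hgLN : ρn gElt (eL n) = eL n)
    (hg0N : ρn gElt (e0 n) = e0 n)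
    (hgInfN : ρn gElt (eInf n) = eInf n)
    (hgKN : ∀ (j : Fin (2 * n)) (b : Bool), ρn gElt (eK n j b) = eK n j (!b))
    (hsLN : ρn σElt (eL n) = eL n)
    (hsKN : ∀ (j : Fin (2 * n)) (b : Bool), ρn σElt (eK n j b) = eL n - eK n j (!b))
    (hs0N : ρn σElt (e0 n) = eL n - e0 n)
    (hsInfN : ρn σElt (eInf n) = eL n - eInf n)
    (hsSN : ρn σElt (eS n) =
      eS n + (2 * n + 1) • eL n
        - (∑ j : Fin (2 * n), (eK n j true + eK n j false)) - e0 n - eInf n) :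
    QInv (LinearMap.prodMap (ρn (gElt * σElt))
      (permRep S (gElt * σElt))) = 2 ^ (4 * n) := by
  unfold QInv
  set A : Nmod n →ₗ[ℤ] Nmod n := ρn (gElt * σElt) with hA
  have hmul : ∀ x : Nmod n, A x = ρn gElt (ρn σElt x) := by
    intro x; rw [hA, map_mul]; rfl
  have hAl : A (eL n) = eL n := by rw [hmul, hsLN, hgLN]
  have hA0 : A (e0 n) = eL n - e0 n := by rw [hmul, hs0N, map_sub, hgLN, hg0N]
  have hAinf : A (eInf n) = eL n - eInf n := by rw [hmul, hsInfN, map_sub, hgLN, hgInfN]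
  have hAk : ∀ (j : Fin (2 * n)) (b : Bool), A (eK n j b) = eL n - eK n j b := by
    intro j b; rw [hmul, hsKN, map_sub, hgLN, hgKN, Bool.not_not]
  have hAs : A (eS n) = eS n + (2 * n + 1) • eL n
      - (∑ j : Fin (2 * n), (eK n j true + eK n j false)) - e0 n - eInf n := by
    rw [hmul, hsSN]
    have hsum : ρn gElt (∑ j : Fin (2 * n), (eK n j true + eK n j false))
        = ∑ j : Fin (2 * n), (eK n j true + eK n j false) := by
      rw [map_sum]
      refine Finset.sum_congr rfl (fun j _ => ?_)
      rw [map_add, hgKN, hgKN, Bool.not_true, Bool.not_false, add_comm]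
    rw [map_sub, map_sub, map_sub, map_add, map_nsmul, hsum, hgSN, hgLN, hg0N, hgInfN]
  -- singles form
  have hAs' : A (Finsupp.single (Sum.inl 0) 1) = Finsupp.single (Sum.inl 0) 1
      + (2 * n + 1) • (Finsupp.single (Sum.inl 1) 1 : Nmod n)
      - (∑ j : Fin (2 * n), ((Finsupp.single (Sum.inr (j, true)) 1 : Nmod n)
          + Finsupp.single (Sum.inr (j, false)) 1))
      - Finsupp.single (Sum.inl 2) 1 - Finsupp.single (Sum.inl 3) 1 := hAs
  have hAl' : A (Finsupp.single (Sum.inl 1) 1) = Finsupp.single (Sum.inl 1) 1 := hAl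
  have hA0' : A (Finsupp.single (Sum.inl 2) 1)
      = Finsupp.single (Sum.inl 1) 1 - Finsupp.single (Sum.inl 2) 1 := hA0
  have hAinf' : A (Finsupp.single (Sum.inl 3) 1)
      = Finsupp.single (Sum.inl 1) 1 - Finsupp.single (Sum.inl 3) 1 := hAinf
  have hAk' : ∀ p : Fin (2 * n) × Bool, A (Finsupp.single (Sum.inr p) 1)
      = Finsupp.single (Sum.inl 1) 1 - Finsupp.single (Sum.inr p) 1 :=
    fun p => hAk p.1 p.2
  -- coordinate lemma at s
  have hL1 : ∀ v : Nmod n, (A v) (Sum.inl 0) = v (Sum.inl 0) := by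
    have h : (Finsupp.lapply (Sum.inl 0 : NIdx n)).comp A
        = (Finsupp.lapply (Sum.inl 0 : NIdx n) : Nmod n →ₗ[ℤ] ℤ) := by
      apply Finsupp.lhom_ext'
      intro a
      apply LinearMap.ext_ring
      rcases a with k | p
      · fin_cases k <;>
          simp [hAs', hAl', hA0', hAinf', Finsupp.single_apply]
      · simp [hAk' p, Finsupp.single_apply]
    intro v
    exact DFunLike.congr_fun h v
  -- coordinate lemma at l
  have hL2 : ∀ v : Nmod n, (A v) (Sum.inl 1)
      = (2 * n + 1) * v (Sum.inl 0) + v (Sum.inl 1)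
        + (v (Sum.inl 2) + v (Sum.inl 3) + ∑ p : Fin (2 * n) × Bool, v (Sum.inr p)) := by
    have h : (Finsupp.lapply (Sum.inl 1 : NIdx n)).comp A
        = (2 * (n : ℤ) + 1) • Finsupp.lapply (Sum.inl 0)
          + Finsupp.lapply (Sum.inl 1) + (Finsupp.lapply (Sum.inl 2)
          + Finsupp.lapply (Sum.inl 3)
          + ∑ p : Fin (2 * n) × Bool, Finsupp.lapply (Sum.inr p)) := by
      apply Finsupp.lhom_ext'
      intro a
      apply LinearMap.ext_ring
      rcases a with k | p
      · fin_cases k <;>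
          simp [hAs', hAl', hA0', hAinf', Finsupp.single_apply] <;> (try push_cast) <;> (try ring)
      · simp [hAk' p, Finsupp.single_apply]
    intro v
    have := DFunLike.congr_fun h v
    simp only [LinearMap.coe_comp, Function.comp_apply, Finsupp.lapply_apply,
      LinearMap.add_apply, LinearMap.smul_apply, LinearMap.coe_sum, Finset.sum_apply,
      smul_eq_mul] at this
    rw [this]
  -- mod 2 functional
  have hL3 : ∀ (p : Fin (2 * n) × Bool) (w : Nmod n),
      (((A w - w) (Sum.inr p) - (A w - w) (Sum.inl 3) : ℤ) : ZMod 2) = 0 := by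
    intro p
    have h : ((Int.castAddHom (ZMod 2)).toIntLinearMap.comp
          ((Finsupp.lapply (Sum.inr p) - Finsupp.lapply (Sum.inl 3)
              : Nmod n →ₗ[ℤ] ℤ).comp
            (A - LinearMap.id)) : Nmod n →ₗ[ℤ] ZMod 2) = 0 := by
      apply Finsupp.lhom_ext'
      intro a
      apply LinearMap.ext_ring
      rcases a with k | q
      · obtain ⟨j0, b0⟩ := p
        fin_cases k <;> cases b0 <;>
          simp [hAs', hAl', hA0', hAinf', Finsupp.single_apply, Prod.mk.injEq,
            Finset.sum_ite_eq'] <;> (try decide)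
      · by_cases hq : q = p
        · subst hq
          simp [hAk' q, Finsupp.single_apply]
          decide
        · simp [hAk' q, Finsupp.single_apply, hq]
    intro w
    have := DFunLike.congr_fun h w
    simpa using this
  -- the product map
  set P : (S →₀ ℤ) →ₗ[ℤ] (S →₀ ℤ) :=
    (permRep S (gElt * σElt) : _ →ₗ[ℤ] _) with hP
  set T : (Nmod n × (S →₀ ℤ)) →ₗ[ℤ] (Nmod n × (S →₀ ℤ)) := A.prodMap P with hT
  have hkerT : ∀ x : Nmod n × (S →₀ ℤ),
      x ∈ LinearMap.ker (1 + T) ↔ (x.1 + A x.1 = 0 ∧ x.2 + P x.2 = 0) := by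
    rintro ⟨v, y⟩
    rw [LinearMap.mem_ker, LinearMap.add_apply, Module.End.one_apply, hT,
      LinearMap.prodMap_apply, Prod.mk_add_mk, Prod.mk_eq_zero]
  -- the mod-2 invariant map
  set φM : (Nmod n × (S →₀ ℤ)) →ₗ[ℤ] ((Fin (2 * n) × Bool) → ZMod 2) :=
    LinearMap.pi (fun p => (Int.castAddHom (ZMod 2)).toIntLinearMap.comp
      (((Finsupp.lapply (Sum.inr p) - Finsupp.lapply (Sum.inl 3) : Nmod n →ₗ[ℤ] ℤ)).comp
        (LinearMap.fst ℤ (Nmod n) (S →₀ ℤ)))) with hφM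
  have hφM_apply : ∀ (x : Nmod n × (S →₀ ℤ)) (p : Fin (2 * n) × Bool),
      φM x p = (((x.1 (Sum.inr p) - x.1 (Sum.inl 3) : ℤ) : ZMod 2)) := by
    intro x p
    simp [hφM]
  have hkill : LinearMap.range (T - 1) ≤ LinearMap.ker φM := by
    rintro x ⟨w, rfl⟩
    rw [LinearMap.mem_ker]
    funext p
    rw [hφM_apply]
    have h1 : ((T - 1) w).1 = A w.1 - w.1 := by
      rw [LinearMap.sub_apply, Module.End.one_apply, hT, LinearMap.prodMap_apply]
      rfl
    rw [h1]
    exact hL3 p w.1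
  set ψ := Submodule.liftQ (LinearMap.range (T - 1)) φM hkill with hψ
  have hψ_mk : ∀ x, ψ (Submodule.Quotient.mk x) = φM x := fun x => rfl
  set Q := (LinearMap.ker (1 + T)).map (LinearMap.range (T - 1)).mkQ with hQ
  set χ := ψ.domRestrict Q with hχ
  -- surjectivity
  have hsurj : Function.Surjective χ := by
    intro t
    set vt : Nmod n := ∑ p : Fin (2 * n) × Bool,
      ((t p).val : ℤ) • ((Finsupp.single (Sum.inr p) 1 : Nmod n)
        - Finsupp.single (Sum.inl 2) 1) with hvt
    have hvtker : vt + A vt = 0 := by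
      rw [hvt, map_sum, ← Finset.sum_add_distrib]
      apply Finset.sum_eq_zero
      intro p _
      rw [map_smul, map_sub, hAk' p, hA0', ← smul_add]
      convert smul_zero (M := ℤ) _ using 2
      abel
    have hmem : (vt, (0 : S →₀ ℤ)) ∈ LinearMap.ker (1 + T) := by
      rw [hkerT]
      exact ⟨hvtker, by simp⟩
    refine ⟨⟨Submodule.Quotient.mk (vt, (0 : S →₀ ℤ)), ⟨_, hmem, rfl⟩⟩, ?_⟩
    have : χ ⟨Submodule.Quotient.mk (vt, (0 : S →₀ ℤ)), ⟨_, hmem, rfl⟩⟩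
        = φM (vt, (0 : S →₀ ℤ)) := rfl
    rw [this]
    funext p
    rw [hφM_apply]
    have h1 : vt (Sum.inr p) = ((t p).val : ℤ) := by
      rw [hvt]
      rw [Finsupp.finset_sum_apply]
      simp [Finsupp.single_apply, Finset.sum_ite_eq']
    have h2 : vt (Sum.inl 3) = 0 := by
      rw [hvt, Finsupp.finset_sum_apply]
      simp [Finsupp.single_apply]
    rw [h1, h2]
    simp [ZMod.natCast_val, ZMod.cast_id]
  -- injectivity
  have hinj : Function.Injective χ := by
    apply (injective_iff_map_eq_zero χ).mpr
    rintro ⟨q, hq⟩ hq0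
    apply Subtype.ext
    show q = 0
    have hψq : ψ q = 0 := hq0
    obtain ⟨x, hxK, hxmk⟩ := hq
    rw [← hxmk, Submodule.mkQ_apply, Submodule.Quotient.mk_eq_zero]
    have hφ0 : φM x = 0 := by
      rw [← hxmk] at hψq
      exact hψq
    obtain ⟨hv, hy⟩ := (hkerT x).mp hxK
    set v : Nmod n := x.1 with hvdef
    set y : S →₀ ℤ := x.2 with hydef
    -- coordinate facts
    have hv0 : v (Sum.inl 0) = 0 := by
      have h := DFunLike.congr_fun hv (Sum.inl 0)
      rw [Finsupp.add_apply, hL1 v] at h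
      simp only [Finsupp.coe_zero, Pi.zero_apply] at h
      omega
    have heq : v (Sum.inl 1) + v (Sum.inl 1)
        + (v (Sum.inl 2) + v (Sum.inl 3) + ∑ p : Fin (2 * n) × Bool, v (Sum.inr p)) = 0 := by
      have h := DFunLike.congr_fun hv (Sum.inl 1)
      rw [Finsupp.add_apply, hL2 v, hv0] at h
      simp only [Finsupp.coe_zero, Pi.zero_apply, mul_zero, zero_add] at h
      linarith
    have hdvdp : ∀ p : Fin (2 * n) × Bool, (2:ℤ) ∣ v (Sum.inr p) + v (Sum.inl 3) := by
      intro p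
      have h := congrFun hφ0 p
      rw [hφM_apply] at h
      have hd : ((2:ℕ):ℤ) ∣ v (Sum.inr p) - v (Sum.inl 3) :=
        (ZMod.intCast_zmod_eq_zero_iff_dvd _ 2).mp (by simpa using h)
      obtain ⟨c, hc⟩ := hd
      exact ⟨c + v (Sum.inl 3), by push_cast at hc; linarith⟩
    have hsum_eq : ∑ p : Fin (2 * n) × Bool, (v (Sum.inr p) + v (Sum.inl 3))
        = (∑ p : Fin (2 * n) × Bool, v (Sum.inr p))
          + (2 * (n:ℤ) * 2) * v (Sum.inl 3) := by
      rw [Finset.sum_add_distrib, Finset.sum_const]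
      simp only [Finset.card_univ, Fintype.card_prod, Fintype.card_fin, Fintype.card_bool,
        nsmul_eq_mul]
      push_cast
      ring
    have hSv : (2:ℤ) ∣ ∑ p : Fin (2 * n) × Bool, v (Sum.inr p) := by
      have h1 : (2:ℤ) ∣ ∑ p : Fin (2 * n) × Bool, (v (Sum.inr p) + v (Sum.inl 3)) :=
        Finset.dvd_sum (fun p _ => hdvdp p)
      obtain ⟨c, hc⟩ := h1
      exact ⟨c - 2 * n * v (Sum.inl 3), by linear_combination hc - hsum_eq⟩
    have hdvd2 : (2:ℤ) ∣ v (Sum.inl 2) + v (Sum.inl 3) := by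
      obtain ⟨d, hd⟩ := hSv
      exact ⟨- v (Sum.inl 1) - d, by linear_combination heq - hd⟩
    have hdvd3 : (2:ℤ) ∣ v (Sum.inl 3) + v (Sum.inl 3) := ⟨v (Sum.inl 3), (two_mul _).symm⟩
    set ε : ℤ := v (Sum.inl 3) with hε
    set b2 : ℤ := -((v (Sum.inl 2) + ε) / 2) with hb2def
    set b3 : ℤ := -((v (Sum.inl 3) + ε) / 2) with hb3def
    set bp : Fin (2 * n) × Bool → ℤ := fun p => -((v (Sum.inr p) + ε) / 2) with hbpdef
    have hb2 : 2 * b2 = -(v (Sum.inl 2) + ε) := by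
      rw [hb2def, mul_neg, Int.mul_ediv_cancel' hdvd2]
    have hb3 : 2 * b3 = -(v (Sum.inl 3) + ε) := by
      rw [hb3def, mul_neg, Int.mul_ediv_cancel' hdvd3]
    have hbp : ∀ p, 2 * bp p = -(v (Sum.inr p) + ε) := by
      intro p
      rw [hbpdef]
      show 2 * -((v (Sum.inr p) + ε) / 2) = _
      rw [mul_neg, Int.mul_ediv_cancel' (hdvdp p)]
    have hSb : 2 * (∑ p : Fin (2 * n) × Bool, bp p)
        = -((∑ p : Fin (2 * n) × Bool, v (Sum.inr p)) + (2 * (n:ℤ) * 2) * ε) := by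
      rw [Finset.mul_sum, Finset.sum_congr rfl (fun p _ => hbp p),
        Finset.sum_neg_distrib, hsum_eq]
    set w1 : Nmod n := ε • Finsupp.single (Sum.inl 0) 1 + b2 • Finsupp.single (Sum.inl 2) 1
      + b3 • Finsupp.single (Sum.inl 3) 1
      + ∑ p : Fin (2 * n) × Bool, bp p • Finsupp.single (Sum.inr p) 1 with hw1
    have hy' : permRep S (gElt * σElt) y + y = 0 := by
      have h := hy
      rw [hP, add_comm] at h
      exact h
    obtain ⟨z, hz⟩ := perm_ker y hy'
    refine ⟨(w1, z), ?_⟩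
    have hTsub : (T - 1) (w1, z) = (A w1 - w1, P z - z) := by
      rw [LinearMap.sub_apply, Module.End.one_apply, hT, LinearMap.prodMap_apply]
      rfl
    rw [hTsub]
    have hzy : P z - z = y := by rw [hP]; exact hz
    have hmain : A w1 - w1 = v := by
      rw [hw1]
      ext i
      rw [Finsupp.sub_apply]
      simp only [map_add, map_smul, map_sum, hAs', hA0', hAinf', hAk']
      rcases i with k | p0
      · fin_cases k
        · -- coordinate s
          simp [Finsupp.single_apply]
          omega
        · -- coordinate l
          simp [Finsupp.single_apply, Finsupp.finset_sum_apply]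
          push_cast
          linarith [hb2, hb3, hSb, heq]
        · -- coordinate l0
          simp [Finsupp.single_apply, Finsupp.finset_sum_apply]
          linarith [hb2]
        · -- coordinate linf
          simp [Finsupp.single_apply, Finsupp.finset_sum_apply]
          linarith [hb3]
      · -- coordinate l_k
        obtain ⟨j0, b0⟩ := p0
        cases b0 <;>
          (simp [Finsupp.single_apply, Finsupp.finset_sum_apply, Prod.mk.injEq,
            Finset.sum_ite_eq']
           linarith [hbp (j0, true), hbp (j0, false)])
    rw [hmain, hzy]
  -- conclusion
  have hbij : Function.Bijective χ := ⟨hinj, hsurj⟩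
  rw [Nat.card_congr (Equiv.ofBijective χ hbij)]
  rw [Nat.card_eq_fintype_card, Fintype.card_fun]
  simp only [Fintype.card_prod, Fintype.card_fin, Fintype.card_bool, ZMod.card]
  rw [show 2 * n * 2 = 4 * n by ring]

end Count
end AuxLemmas


theorem stmt3 (n m : ℕ) (hn : 1 ≤ n) (hm : 1 ≤ m) (hnm : n ≠ m)
    (ρn : Representation ℤ KleinW (Nmod n))
    (hgSN : ρn gElt (eS n) = eS n)
    (hgLN : ρn gElt (eL n) = eL n)
    (hg0N : ρn gElt (e0 n) = e0 n)
    (hgInfN : ρn gElt (eInf n) = eInf n)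
    (hgKN : ∀ (j : Fin (2 * n)) (b : Bool), ρn gElt (eK n j b) = eK n j (!b))
    (hsLN : ρn σElt (eL n) = eL n)
    (hsKN : ∀ (j : Fin (2 * n)) (b : Bool), ρn σElt (eK n j b) = eL n - eK n j (!b))
    (hs0N : ρn σElt (e0 n) = eL n - e0 n)
    (hsInfN : ρn σElt (eInf n) = eL n - eInf n)
    (hsSN : ρn σElt (eS n) =
      eS n + (2 * n + 1) • eL n
        - (∑ j : Fin (2 * n), (eK n j true + eK n j false)) - e0 n - eInf n)
    (ρm : Representation ℤ KleinW (Nmod m))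
    (hgSM : ρm gElt (eS m) = eS m)
    (hgLM : ρm gElt (eL m) = eL m)
    (hg0M : ρm gElt (e0 m) = e0 m)
    (hgInfM : ρm gElt (eInf m) = eInf m)
    (hgKM : ∀ (j : Fin (2 * m)) (b : Bool), ρm gElt (eK m j b) = eK m j (!b))
    (hsLM : ρm σElt (eL m) = eL m)
    (hsKM : ∀ (j : Fin (2 * m)) (b : Bool), ρm σElt (eK m j b) = eL m - eK m j (!b))
    (hs0M : ρm σElt (e0 m) = eL m - e0 m)
    (hsInfM : ρm σElt (eInf m) = eL m - eInf m)
    (hsSM : ρm σElt (eS m) =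
      eS m + (2 * m + 1) • eL m
        - (∑ j : Fin (2 * m), (eK m j true + eK m j false)) - e0 m - eInf m)
    :
    ¬ ∃ (S S' : Type) (_ : Fintype S) (_ : Fintype S')
        (mS : MulAction KleinW S) (mS' : MulAction KleinW S')
        (e : (Nmod n × (S →₀ ℤ)) ≃ₗ[ℤ] (Nmod m × (S' →₀ ℤ))),
        ∀ (w : KleinW) (x : Nmod n) (y : S →₀ ℤ),
          e (ρn w x, ((@Representation.ofMulAction ℤ _ KleinW _ S mS) w (MonoidAlgebra.ofCoeff y)).coeff)
            = (ρm w (e (x, y)).1,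
               ((@Representation.ofMulAction ℤ _ KleinW _ S' mS') w (MonoidAlgebra.ofCoeff (e (x, y)).2)).coeff) := by
  rintro ⟨S, S', fS, fS', mS, mS', e, hcomm⟩
  have hc : ∀ x : Nmod n × (S →₀ ℤ),
      e ((LinearMap.prodMap (ρn (gElt * σElt))
          (permRep S (gElt * σElt))) x)
        = (LinearMap.prodMap (ρm (gElt * σElt))
          (permRep S' (gElt * σElt))) (e x) := by
    intro x
    have h := hcomm (gElt * σElt) x.1 x.2
    exact h
  have h1 := NQuot_card n S ρn hgSN hgLN hg0N hgInfN hgKN hsLN hsKN hs0N hsInfN hsSN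
  have h2 := NQuot_card m S' ρm hgSM hgLM hg0M hgInfM hgKM hsLM hsKM hs0M hsInfM hsSM
  have h3 := card_quot_congr
    (LinearMap.prodMap (ρn (gElt * σElt))
      (permRep S (gElt * σElt)))
    (LinearMap.prodMap (ρm (gElt * σElt))
      (permRep S' (gElt * σElt))) e hc
  have hpow : (2:ℕ) ^ (4 * n) = 2 ^ (4 * m) := by
    rw [← h1, h3, h2]
  have h4 : 4 * n = 4 * m := Nat.pow_right_injective (le_refl 2) hpow
  omega
end

section
/- Let G be a finite group and S a G-set. Then the first group cohomology of the permutation representation ℤ[S] vanishes: H¹(G, ℤ[S]) = 0 (the cohomology group is trivial). -/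
/-!
STATEMENT 5: For a finite group `G` and a `G`-set `S`, the first group cohomology
of the permutation representation `ℤ[S]` vanishes: `H¹(G, ℤ[S]) = 0`.
-/

theorem stmt5 (G : Type) [Group G] [Finite G] (S : Type) [MulAction G S] :
    Subsingleton (groupCohomology.H1 (Rep.of (Representation.ofMulAction ℤ G S))) := by
  classical
  set A := Rep.of (Representation.ofMulAction ℤ G S) with hA
  refine subsingleton_of_forall_eq 0 fun x => groupCohomology.H1_induction_on x ?_
  intro f
  rw [groupCohomology.H1π_eq_zero_iff]
  suffices hsuff : ∃ x : A, ∀ g : G, A.ρ g x - x = f g by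
    obtain ⟨x, hx⟩ := hsuff
    exact ⟨x, funext fun g => hx g⟩
  have hf := (groupCohomology.mem_cocycles₁_iff (f : G → A)).1 f.2
  set F : G → (S →₀ ℤ) := fun g => (f g).coeff with hFdef
  have hF1 : F 1 = 0 := by
    have : f 1 = 0 := groupCohomology.cocycles₁_map_one f
    simp only [hFdef, this]; rfl
  have happly : ∀ (g g' : G) (s : S),
      F (g * g') s = F g' (g⁻¹ • s) + F g s := by
    intro g g' s
    have h2 : F (g * g') = ((Representation.ofMulAction ℤ G S g) (f g')).coeff + F g := by
      simp only [hFdef]; rw [hf g g']; rfl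
    rw [h2]
    rw [Finsupp.add_apply, Representation.ofMulAction_apply]
  -- if h fixes t then f h t = 0
  have fix : ∀ (h : G) (t : S), h • t = t → F h t = 0 := by
    intro h t ht
    have hinv : h⁻¹ • t = t := by
      rw [inv_smul_eq_iff]; exact ht.symm
    have pow : ∀ n : ℕ, F (h ^ n) t = n * F h t := by
      intro n
      induction n with
      | zero => simp [pow_zero, hF1]
      | succ n ih =>
        have h3 : F (h * h ^ n) t = F (h ^ n) (h⁻¹ • t) + F h t := happly h (h ^ n) t
        rw [← pow_succ'] at h3
        rw [h3, hinv, ih]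
        push_cast
        ring
    have hcard : h ^ (Nat.card G) = 1 := pow_card_eq_one'
    have h0 : ((Nat.card G : ℤ)) * F h t = 0 := by
      rw [← pow (Nat.card G), hcard, hF1]
      simp
    have hne : (Nat.card G : ℤ) ≠ 0 := by
      exact_mod_cast Nat.card_pos.ne'
    exact (mul_eq_zero.1 h0).resolve_left hne
  -- base point of each orbit
  set base : S → S := fun s => (Quotient.mk (MulAction.orbitRel G S) s).out with hbase
  have hex : ∀ s : S, ∃ g : G, g • base s = s := by
    intro s
    have h4 : (Quotient.mk (MulAction.orbitRel G S) s).out ∈ MulAction.orbit G s :=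
      Quotient.mk_out (s := MulAction.orbitRel G S) s
    obtain ⟨g, hg⟩ := h4
    exact ⟨g⁻¹, by rw [hbase]; simp [← hg]⟩
  set sel : S → G := fun s => (hex s).choose with hsel
  have hselspec : ∀ s : S, sel s • base s = s := fun s => (hex s).choose_spec
  set a : S → ℤ := fun s => F (sel s) s with ha
  -- well-definedness: any g carrying base s to s gives the same value
  have key : ∀ (s : S) (g : G), g • base s = s → F g s = a s := by
    intro s g hg
    have hdecomp : g = sel s * ((sel s)⁻¹ * g) := by group
    have hfixes : ((sel s)⁻¹ * g) • base s = base s := by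
      rw [mul_smul, hg, inv_smul_eq_iff]; exact (hselspec s).symm
    have hb : (sel s)⁻¹ • s = base s := by
      rw [inv_smul_eq_iff]; exact (hselspec s).symm
    calc F g s = F (sel s * ((sel s)⁻¹ * g)) s := by rw [← hdecomp]
      _ = F ((sel s)⁻¹ * g) ((sel s)⁻¹ • s) + F (sel s) s := happly _ _ s
      _ = a s := by rw [hb, fix _ _ hfixes, zero_add]
  -- main identity
  have main : ∀ (g : G) (s : S), F g s = a s - a (g⁻¹ • s) := by
    intro g s
    set t := g⁻¹ • s with htdef
    have hq : (Quotient.mk (MulAction.orbitRel G S) t) = Quotient.mk (MulAction.orbitRel G S) s := by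
      rw [htdef]
      exact Quotient.sound ((MulAction.orbitRel_apply).2 (MulAction.mem_orbit s g⁻¹))
    have hbt : base t = base s := by
      simp only [hbase]
      exact congrArg Quotient.out hq
    have hgt : (g * sel t) • base s = s := by
      rw [mul_smul, ← hbt, hselspec t, htdef]
      simp
    have h1 : F (g * sel t) s = a s := key s _ hgt
    have h2 : F (g * sel t) s = F (sel t) (g⁻¹ • s) + F g s := happly _ _ s
    have h3 : F (sel t) (g⁻¹ • s) = a t := rfl
    rw [h2, h3] at h1
    omega
  -- build the finsupp
  have _ : Fintype G := Fintype.ofFinite G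
  refine ⟨(MonoidAlgebra.ofCoeff (Finsupp.onFinset (Finset.univ.biUnion fun g : G => (F g).support)
      (fun s => -a s) ?_) : A), ?_⟩
  · intro s hs
    have h5 : F (sel s) s ≠ 0 := by
      simpa [ha] using hs
    exact Finset.mem_biUnion.2 ⟨sel s, Finset.mem_univ _, Finsupp.mem_support_iff.2 h5⟩
  · intro g
    apply MonoidAlgebra.coeff_injective
    show ((Representation.ofMulAction ℤ G S g) (MonoidAlgebra.ofCoeff (Finsupp.onFinset _ (fun s => -a s) _))
        - MonoidAlgebra.ofCoeff (Finsupp.onFinset _ (fun s => -a s) _)).coeff = F g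
    ext s
    rw [MonoidAlgebra.coeff_sub, Finsupp.sub_apply, Representation.coeff_ofMulAction]
    simp only [MonoidAlgebra.coeff_ofCoeff, Finsupp.onFinset_apply]
    rw [main g s]
    ring
end

section
/- Let G be a finite group, and let N be a representation of G on an abelian group that is invertible, i.e. a direct summand of a permutation module: there exist a G-set S and G-equivariant homomorphisms i : N → ℤ[S] and p : ℤ[S] → N with p ∘ i = id_N. Then N is coflasque (H¹-trivial): for every subgroup H ≤ G, the first group cohomology H¹(H, N) of the restriction of N to H is trivial. -/
/-!
STATEMENT 6: Let `G` be a finite group and `N` a `G`-representation on an abelian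
group which is invertible, i.e. a direct summand of a permutation module: there are
a `G`-set `S` and `G`-equivariant homomorphisms `i : N → ℤ[S]`, `p : ℤ[S] → N` with
`p ∘ i = id`. Then `N` is coflasque (`H¹`-trivial): `H¹(H, N) = 0` for every
subgroup `H ≤ G`.
-/

theorem stmt6 (G : Type) [Group G] [Finite G]
    (N : Type) [AddCommGroup N] [Module ℤ N] (ρ : Representation ℤ G N)
    (S : Type) [MulAction G S]
    (i : N →ₗ[ℤ] (S →₀ ℤ)) (p : (S →₀ ℤ) →ₗ[ℤ] N)
    (hi : ∀ (g : G) (x : N), i (ρ g x) = (Representation.ofMulAction ℤ G S g (MonoidAlgebra.ofCoeff (i x))).coeff)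
    (hp : ∀ (g : G) (y : S →₀ ℤ), p (Representation.ofMulAction ℤ G S g (MonoidAlgebra.ofCoeff y)).coeff = ρ g (p y))
    (hpi : ∀ x : N, p (i x) = x)
    (H : Subgroup G) :
    Subsingleton (groupCohomology.H1 (Rep.of (ρ.comp H.subtype))) := by
  classical
  set A : Rep ℤ H := Rep.of (ρ.comp H.subtype) with hA
  suffices htop : ∀ f : groupCohomology.cocycles₁ A, (f : H → A) ∈ groupCohomology.coboundaries₁ A by
    have h0 : ∀ x : groupCohomology.H1 A, x = 0 := fun x =>
      groupCohomology.H1_induction_on x (fun f => (groupCohomology.H1π_eq_zero_iff f).2 (htop f))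
    exact ⟨fun a b => by rw [h0 a, h0 b]⟩
  intro f
  show ∃ y, (groupCohomology.d₀₁ A).hom y = (f : H → A)
  set F : H → N := fun g => f g with hF
  have hf : ∀ g h : H, F (g * h) = ρ (g : G) (F h) + F g := fun g h =>
    (groupCohomology.mem_cocycles₁_iff (f : H → A)).1 f.2 g h
  have hFone : F 1 = 0 := groupCohomology.cocycles₁_map_one f
  set π : G → (S →₀ ℤ) → (S →₀ ℤ) := fun g y =>
    (Representation.ofMulAction ℤ G S g (MonoidAlgebra.ofCoeff y)).coeff with hπ
  have hi' : ∀ (g : G) (x : N), i (ρ g x) = π g (i x) := hi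
  have hp' : ∀ (g : G) (y : S →₀ ℤ), p (π g y) = ρ g (p y) := hp
  -- transfer the cocycle to the permutation module
  set φ : H → (S →₀ ℤ) := fun g => i (F g) with hφ
  have hφmul : ∀ g h : H, φ (g * h) = π (g : G) (φ h) + φ g := by
    intro g h
    simp only [hφ, hf g h, map_add, hi']
  have hφone : φ 1 = 0 := by
    simp only [hφ, hFone, map_zero]
  have hφinv : ∀ g : H, φ g⁻¹ = - (π ((g : G))⁻¹ (φ g)) := by
    intro g
    have h0 := hφmul g⁻¹ g
    rw [inv_mul_cancel, hφone] at h0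
    have h2 : ((g⁻¹ : H) : G) = ((g : G))⁻¹ := rfl
    rw [h2] at h0
    exact eq_neg_of_add_eq_zero_right h0.symm
  -- stabilizer vanishing
  have hstab : ∀ (g : H) (s : S), (g : G) • s = s → φ g s = 0 := by
    intro g s hgs
    have key : ∀ n : ℕ, φ (g ^ n) s = n * φ g s := by
      intro n
      induction n with
      | zero => simp [pow_zero, hφone]
      | succ n ih =>
        have h1 : φ (g ^ (n + 1)) = π (g : G) (φ (g ^ n)) + φ g := by
          rw [pow_succ']
          exact hφmul g (g ^ n)
        rw [h1]
        have hval : (π (g : G) (φ (g ^ n))) s = φ (g ^ n) ((g : G)⁻¹ • s) :=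
          Representation.coeff_ofMulAction (g : G) (MonoidAlgebra.ofCoeff (φ (g ^ n))) s
        have hfix : (g : G)⁻¹ • s = s := by
          rw [inv_smul_eq_iff, hgs]
        rw [Finsupp.add_apply, hval, hfix, ih]
        push_cast
        ring
    have horder := key (orderOf g)
    rw [pow_orderOf_eq_one, hφone] at horder
    have hne : (orderOf g : ℤ) ≠ 0 := by
      exact_mod_cast (orderOf_pos g).ne'
    rcases mul_eq_zero.1 horder.symm with h | h
    · exact absurd h hne
    · exact h
  -- orbit representatives
  set rep : S → S := fun s => (Quotient.mk (MulAction.orbitRel H S) s).out with hrep_def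
  have hrep_ex : ∀ s : S, ∃ h : H, (h : G) • rep s = s := by
    intro s
    obtain ⟨h, hh⟩ := Quotient.exact ((Quotient.mk (MulAction.orbitRel H S) s).out_eq)
    refine ⟨h⁻¹, ?_⟩
    have h1 : (h : G) • s = rep s := hh
    rw [← h1]
    simp [smul_smul]
  have hrep_eq : ∀ (g : H) (s : S), rep ((g : G) • s) = rep s := by
    intro g s
    have h1 : (Quotient.mk (MulAction.orbitRel H S) ((g : G) • s)) =
        Quotient.mk (MulAction.orbitRel H S) s :=
      Quotient.sound ⟨g, rfl⟩
    simp only [hrep_def, h1]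
  choose gsel hgsel using hrep_ex
  set m : S → ℤ := fun s => φ (gsel s) s with hm_def
  -- independence of the choice
  have hm : ∀ (h : H) (s : S), (h : G) • rep s = s → φ h s = m s := by
    intro h s hh
    set g := gsel s with hg
    have hk : (((g⁻¹ * h : H)) : G) • rep s = rep s := by
      have h1 : ((g⁻¹ * h : H) : G) = ((g : G))⁻¹ * (h : G) := rfl
      rw [h1, mul_smul, hh, inv_smul_eq_iff, hgsel s]
    have hdecomp : h = g * (g⁻¹ * h) := by group
    rw [hdecomp, hφmul, Finsupp.add_apply]
    have hval : (π (g : G) (φ (g⁻¹ * h))) s = φ (g⁻¹ * h) ((g : G)⁻¹ • s) :=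
      Representation.coeff_ofMulAction _ _ _
    have hrs : (g : G)⁻¹ • s = rep s := by
      rw [inv_smul_eq_iff, hgsel s]
    rw [hval, hrs, hstab _ _ hk, zero_add]
  -- finite support
  have hsupp : (Function.support m).Finite := by
    have hsub : Function.support m ⊆ ⋃ h : H, ((φ h).support : Set S) := by
      intro s hs
      exact Set.mem_iUnion.2 ⟨gsel s, Finsupp.mem_support_iff.2 hs⟩
    exact Set.Finite.subset (Set.finite_iUnion fun h => (φ h).support.finite_toSet) hsub
  set M : S →₀ ℤ := Finsupp.ofSupportFinite m hsupp with hM_def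
  have hM : ∀ s, M s = m s := fun s => rfl
  -- the coboundary identity in the permutation module
  have hkey : ∀ (g : H) (s : S), M ((g : G)⁻¹ • s) - M s = - φ g s := by
    intro g s
    set t := (g : G)⁻¹ • s with ht_def
    have ht : rep t = rep s := by
      have h0 := hrep_eq g⁻¹ s
      have hc : ((g⁻¹ : H) : G) = ((g : G))⁻¹ := rfl
      rw [hc] at h0
      exact h0
    have h1 : ((g⁻¹ * gsel s : H) : G) • rep t = t := by
      have hc : ((g⁻¹ * gsel s : H) : G) = ((g : G))⁻¹ * ((gsel s : G)) := rfl
      rw [ht, hc, mul_smul, hgsel s]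
    have h2 : M t = φ (g⁻¹ * gsel s) t := (hM t).trans (hm _ _ h1).symm
    have h3 : φ (g⁻¹ * gsel s) = π ((g⁻¹ : H) : G) (φ (gsel s)) + φ g⁻¹ := hφmul g⁻¹ (gsel s)
    have hc : ((g⁻¹ : H) : G) = ((g : G))⁻¹ := rfl
    have h4 : (π (((g : G))⁻¹) (φ (gsel s))) t = φ (gsel s) (((g : G)⁻¹)⁻¹ • t) :=
      Representation.coeff_ofMulAction _ _ _
    have hts : ((g : G)⁻¹)⁻¹ • t = s := by
      rw [ht_def, inv_inv, smul_inv_smul]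
    have h5 : φ g⁻¹ t = - φ g s := by
      rw [hφinv g, Finsupp.neg_apply]
      have h6 : (π (((g : G))⁻¹) (φ g)) t = φ g (((g : G)⁻¹)⁻¹ • t) :=
        Representation.coeff_ofMulAction _ _ _
      rw [h6, hts]
    rw [h2, h3, hc, Finsupp.add_apply, h4, hts, h5, hM s]
    ring
  -- conclude
  refine ⟨p (-M), funext fun g => ?_⟩
  have hπM : π (g : G) (-M) - (-M) = i (F g) := by
    ext s
    have happ : (π (g : G) (-M)) s = (-M) ((g : G)⁻¹ • s) :=
      Representation.coeff_ofMulAction _ _ _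
    rw [Finsupp.sub_apply, happ, Finsupp.neg_apply, Finsupp.neg_apply]
    have h7 := hkey g s
    have hφs : φ g s = (i (F g)) s := rfl
    linarith [h7]
  show ρ (g : G) (p (-M)) - p (-M) = F g
  rw [← hp', ← map_sub, hπM, hpi]
end

section
/- Let G be a finite group, S a finite G-set, and let N be a representation of G on an abelian group that is a direct summand of the permutation module ℤ[S] (there exist G-equivariant homomorphisms i : N → ℤ[S] and p : ℤ[S] → N with p ∘ i = id_N). Then N is flasque: for every subgroup H ≤ G, the first group cohomology H¹(H, N°) of the dual module N° = Hom_ℤ(N, ℤ), equipped with the contragredient action (g·f)(x) = f(g⁻¹·x) and restricted to H, is trivial. -/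
/-!
STATEMENT 7: Let `G` be a finite group, `S` a finite `G`-set, and `N` a
`G`-representation on an abelian group which is a direct summand of the permutation
module `ℤ[S]` (there are `G`-equivariant homomorphisms `i : N → ℤ[S]`,
`p : ℤ[S] → N` with `p ∘ i = id`). Then `N` is flasque: for every subgroup `H ≤ G`,
`H¹(H, N°) = 0`, where `N° = Hom_ℤ(N, ℤ)` carries the contragredient action
`(g·f)(x) = f(g⁻¹·x)`.
-/

theorem stmt7 (G : Type) [Group G] [Finite G]
    (S : Type) [Fintype S] [MulAction G S]
    (N : Type) [AddCommGroup N] [Module ℤ N] (ρ : Representation ℤ G N)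
    (i : N →ₗ[ℤ] (S →₀ ℤ)) (p : (S →₀ ℤ) →ₗ[ℤ] N)
    (hi : ∀ (g : G) (x : N), i (ρ g x) = (Representation.ofMulAction ℤ G S g (MonoidAlgebra.ofCoeff (i x))).coeff)
    (hp : ∀ (g : G) (y : S →₀ ℤ), p (Representation.ofMulAction ℤ G S g (MonoidAlgebra.ofCoeff y)).coeff = ρ g (p y))
    (hpi : ∀ x : N, p (i x) = x)
    (H : Subgroup G) :
    Subsingleton (groupCohomology.H1 (Rep.of (ρ.dual.comp H.subtype))) := by
  classical
  set A := Rep.of (ρ.dual.comp H.subtype) with hA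
  suffices h : ∀ f : groupCohomology.cocycles₁ A, ⇑f ∈ groupCohomology.coboundaries₁ A by
    refine subsingleton_of_forall_eq 0 fun y => ?_
    exact groupCohomology.H1_induction_on y fun f => (groupCohomology.H1π_eq_zero_iff f).2 (h f)
  intro f
  have hf := (groupCohomology.mem_cocycles₁_iff (f : H → A)).1 f.2
  let F : H → (N →ₗ[ℤ] ℤ) := fun g => f g
  have hf' : ∀ g h : H, F (g * h) = (F h) ∘ₗ (ρ ((g : G))⁻¹) + F g := fun g h => hf g h
  let φ : H → S → ℤ := fun g s => F g (p (Finsupp.single s 1))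
  have hφmul : ∀ (g h : H) (s : S), φ (g * h) s = φ h ((g : G)⁻¹ • s) + φ g s := by
    intro g h s
    have h1 := congrArg (fun (y : N →ₗ[ℤ] ℤ) => y (p (Finsupp.single s 1))) (hf' g h)
    simp only [LinearMap.add_apply, LinearMap.comp_apply] at h1
    rw [← hp ((g : G))⁻¹ (Finsupp.single s 1), MonoidAlgebra.ofCoeff_single, Representation.ofMulAction_single,
      MonoidAlgebra.coeff_single] at h1
    exact h1
  have hφ1 : ∀ s : S, φ 1 s = 0 := by
    intro s
    have h0 : (f : H → A) 1 = 0 := groupCohomology.cocycles₁_map_one f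
    have h1 : F 1 = 0 := h0
    show F 1 (p (Finsupp.single s 1)) = 0
    rw [h1]; rfl
  haveI : Fintype H := Fintype.ofFinite H
  have hpow : ∀ (w : H) (s₀ : S), (w : G) • s₀ = s₀ → ∀ n : ℕ, φ (w ^ n) s₀ = n * φ w s₀ := by
    intro w s₀ hw n
    induction n with
    | zero => simpa using hφ1 s₀
    | succ n ih =>
      have h1 : ((w : G))⁻¹ • s₀ = s₀ := inv_smul_eq_iff.mpr hw.symm
      rw [pow_succ', hφmul w (w ^ n) s₀, h1, ih]
      push_cast; ring
  have hstab : ∀ (w : H) (s₀ : S), (w : G) • s₀ = s₀ → φ w s₀ = 0 := by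
    intro w s₀ hw
    have h1 := hpow w s₀ hw (Fintype.card H)
    rw [pow_card_eq_one, hφ1] at h1
    have hc : (Fintype.card H : ℤ) ≠ 0 := by exact_mod_cast Fintype.card_ne_zero
    exact (mul_eq_zero.1 h1.symm).resolve_left hc
  have hwd : ∀ (k k' : H) (s s₀ : S), (k : G) • s = s₀ → (k' : G) • s = s₀ →
      φ k s₀ = φ k' s₀ := by
    intro k k' s s₀ hk hk'
    have hks : ((k : G))⁻¹ • s₀ = s := inv_smul_eq_iff.mpr hk.symm
    have hw : ((k' * k⁻¹ : H) : G) • s₀ = s₀ := by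
      simp only [Subgroup.coe_mul, InvMemClass.coe_inv, mul_smul, hks, hk']
    have h2 : (((k' * k⁻¹ : H) : G))⁻¹ • s₀ = s₀ := inv_smul_eq_iff.mpr hw.symm
    have e : k' = (k' * k⁻¹) * k := by group
    rw [e, hφmul (k' * k⁻¹) k s₀, h2, hstab _ _ hw, add_zero]
  let rep : S → S := fun s => (Quotient.mk (MulAction.orbitRel H S) s).out
  have hrep_orbit : ∀ s : S, ∃ k : H, (k : G) • s = rep s := by
    intro s
    have h1 : rep s ∈ MulAction.orbit H s := by
      have h2 := Quotient.mk_out (s := MulAction.orbitRel H S) s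
      rwa [MulAction.orbitRel_apply] at h2
    obtain ⟨k, hk⟩ := h1
    exact ⟨k, hk⟩
  choose kk hkk using hrep_orbit
  let b : S → ℤ := fun s => φ (kk s) (rep s)
  have hrep_smul : ∀ (g : H) (s : S), rep ((g : G)⁻¹ • s) = rep s := by
    intro g s
    have h1 : Quotient.mk (MulAction.orbitRel H S) ((g : G)⁻¹ • s) =
        Quotient.mk (MulAction.orbitRel H S) s :=
      Quotient.sound (MulAction.mem_orbit_iff.mpr ⟨g⁻¹, rfl⟩)
    show (Quotient.mk (MulAction.orbitRel H S) ((g : G)⁻¹ • s)).out = _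
    rw [h1]
  have hkey : ∀ (g : H) (s : S), b ((g : G)⁻¹ • s) - b s = φ g s := by
    intro g s
    have h1 : b ((g : G)⁻¹ • s) = φ (kk ((g : G)⁻¹ • s)) (rep s) := by
      show φ (kk ((g : G)⁻¹ • s)) (rep ((g : G)⁻¹ • s)) = _
      rw [hrep_smul g s]
    have h2 : φ (kk ((g : G)⁻¹ • s)) (rep s) = φ (kk s * g) (rep s) := by
      refine hwd _ _ ((g : G)⁻¹ • s) (rep s) ?_ ?_
      · rw [← hrep_smul g s]; exact hkk _
      · simp only [Subgroup.coe_mul, mul_smul, smul_inv_smul]; exact hkk s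
    have h4 : ((kk s : G))⁻¹ • rep s = s := inv_smul_eq_iff.mpr (hkk s).symm
    rw [h1, h2, hφmul (kk s) g (rep s), h4]
    show φ g s + φ (kk s) (rep s) - φ (kk s) (rep s) = φ g s
    ring
  let x : N →ₗ[ℤ] ℤ := ∑ s : S, b s • ((Finsupp.lapply s).comp i)
  have hxapp : ∀ v : N, x v = ∑ s : S, b s * (i v) s := by
    intro v
    show (∑ s : S, b s • ((Finsupp.lapply s).comp i)) v = _
    rw [LinearMap.sum_apply]
    refine Finset.sum_congr rfl fun s _ => ?_
    simp [Finsupp.lapply]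
  have hsingle : ∀ y : S →₀ ℤ, y = ∑ s : S, Finsupp.single s (y s) := by
    intro y
    ext t
    rw [Finsupp.finset_sum_apply]
    simp [Finsupp.single_apply]
  have hfg : ∀ (g : H) (v : N), F g v = ∑ s : S, (i v) s * φ g s := by
    intro g v
    conv_lhs => rw [← hpi v, hsingle (i v)]
    rw [map_sum, map_sum]
    refine Finset.sum_congr rfl fun s _ => ?_
    have h1 : Finsupp.single s ((i v) s) = (i v) s • Finsupp.single s (1 : ℤ) := by
      rw [Finsupp.smul_single, smul_eq_mul, mul_one]
    rw [h1, LinearMap.map_smul, LinearMap.map_smul, smul_eq_mul]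
  apply LinearMap.mem_range.2
  refine ⟨x, funext fun g => ?_⟩
  have key : x ∘ₗ (ρ ((g : G))⁻¹) - x = F g := by
    refine LinearMap.ext fun v => ?_
    rw [LinearMap.sub_apply, LinearMap.comp_apply, hfg g v, hxapp, hxapp]
    have hiv : ∀ s : S, (i (ρ ((g : G))⁻¹ v)) s = (i v) ((g : G) • s) := by
      intro s
      rw [hi, Representation.coeff_ofMulAction, MonoidAlgebra.coeff_ofCoeff, inv_inv]
    simp_rw [hiv]
    rw [show (∑ s : S, b s * (i v) ((g : G) • s)) = ∑ s : S, b ((g : G)⁻¹ • s) * (i v) s from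
      Fintype.sum_equiv (MulAction.toPerm ((g : G))) _ _ (fun s => by
        simp [MulAction.toPerm, inv_smul_smul])]
    rw [← Finset.sum_sub_distrib]
    refine Finset.sum_congr rfl fun s _ => ?_
    rw [← sub_mul, hkey g s]
    ring
  exact key
end

section
/- Let W be a finite group, let N and N' be representations of W on abelian groups, and let S, S' be finite W-sets. Suppose there is an isomorphism of W-representations N ⊕ ℤ[S] ≅ N' ⊕ ℤ[S'] (i.e. N and N' are similar W-modules). Then for every subgroup U ≤ W, the first group cohomology groups H¹(U, N) and H¹(U, N') of the restrictions to U are isomorphic. -/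
/-!
STATEMENT 8: Let `W` be a finite group, `N`, `N'` representations of `W` on abelian
groups, and `S`, `S'` finite `W`-sets. If there is an isomorphism of
`W`-representations `N ⊕ ℤ[S] ≅ N' ⊕ ℤ[S']` (i.e. `N` and `N'` are similar), then
for every subgroup `U ≤ W` the groups `H¹(U, N)` and `H¹(U, N')` are isomorphic.
-/

open groupCohomology

namespace Stmt8Aux

variable {k G : Type} [CommRing k] [Group G]

/-- 1-coboundaries as a submodule of the 1-cocycles. -/
abbrev cob (A : Rep k G) : Submodule k (cocycles₁ A) :=
  (coboundaries₁ A).comap (cocycles₁ A).subtype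

/-- H¹ as the quotient of cocycles by coboundaries. -/
abbrev H1q (A : Rep k G) := cocycles₁ A ⧸ cob A

/-- The quotient map onto `H1q`. -/
abbrev H1q_π (A : Rep k G) : cocycles₁ A →ₗ[k] H1q A := (cob A).mkQ

lemma mem_cob_iff {A : Rep k G} (f : cocycles₁ A) :
    f ∈ cob A ↔ ∃ x : A, ∀ g : G, A.ρ g x - x = f g := by
  show (f : G → A) ∈ LinearMap.range (d₀₁ A).hom ↔ _
  rw [LinearMap.mem_range]
  simp only [funext_iff]
  exact Iff.rfl

/-- `H1q` agrees with Mathlib's `H1`. -/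
noncomputable def H1qEquiv (A : Rep k G) : H1q A ≃ₗ[k] groupCohomology.H1 A :=
  (Submodule.quotEquivOfEq _ _ (by
    ext f
    simp only [LinearMap.mem_ker]
    exact (H1π_eq_zero_iff f).symm)).trans
    (LinearMap.quotKerEquivOfSurjective (H1π A).hom
      (fun x => H1_induction_on x (fun y => ⟨y, rfl⟩)))

section maps
variable (A B : Rep k G)

/-- Map on 1-cocycles induced by an equivariant linear map. -/
noncomputable def cocMap (φ : A →ₗ[k] B) (hφ : ∀ g a, φ (A.ρ g a) = B.ρ g (φ a)) :
    cocycles₁ A →ₗ[k] cocycles₁ B where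
  toFun f := ⟨fun g => φ (f.1 g), (mem_cocycles₁_iff (A := B) _).2 fun g h => by
    have h1 := (mem_cocycles₁_iff (A := A) f.1).1 f.2 g h
    show φ (f.1 (g * h)) = B.ρ g (φ (f.1 h)) + φ (f.1 g)
    rw [show f.1 (g * h) = A.ρ g (f.1 h) + f.1 g from h1, map_add, hφ]⟩
  map_add' f₁ f₂ := Subtype.ext (funext fun g => map_add φ _ _)
  map_smul' r f := Subtype.ext (funext fun g => map_smul φ r _)

@[simp] lemma cocMap_apply (φ : A →ₗ[k] B) (hφ) (f : cocycles₁ A) (g : G) :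
    (cocMap A B φ hφ f).1 g = φ (f.1 g) := rfl

/-- Map on H¹ induced by an equivariant linear map. -/
noncomputable def H1Map (φ : A →ₗ[k] B) (hφ : ∀ g a, φ (A.ρ g a) = B.ρ g (φ a)) :
    H1q A →ₗ[k] H1q B :=
  Submodule.liftQ _ ((H1q_π B).comp (cocMap A B φ hφ)) (by
    intro f hf
    obtain ⟨x, hx⟩ := (mem_cob_iff (A := A) f).1 hf
    simp only [LinearMap.mem_ker, LinearMap.comp_apply, H1q_π, Submodule.mkQ_apply,
      Submodule.Quotient.mk_eq_zero]
    exact (mem_cob_iff (A := B) _).2 ⟨φ x, fun g => by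
      show B.ρ g (φ x) - φ x = φ (f.1 g)
      rw [← hφ, ← map_sub]
      exact congrArg φ (hx g)⟩)

@[simp] lemma H1Map_mk (φ : A →ₗ[k] B) (hφ) (f : cocycles₁ A) :
    H1Map A B φ hφ (Submodule.Quotient.mk f) =
      Submodule.Quotient.mk (cocMap A B φ hφ f) := rfl

/-- H¹ equivalence from an equivariant linear equivalence. -/
noncomputable def H1EquivOfRepEquiv (e : A ≃ₗ[k] B) (he : ∀ g a, e (A.ρ g a) = B.ρ g (e a)) :
    H1q A ≃ₗ[k] H1q B := by
  have he' : ∀ (g : G) (b : B), e.symm (B.ρ g b) = A.ρ g (e.symm b) := fun g b => by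
    apply e.injective
    rw [e.apply_symm_apply, he, e.apply_symm_apply]
  exact LinearEquiv.ofLinear (H1Map A B e.toLinearMap he) (H1Map B A e.symm.toLinearMap he')
    (by
      apply Submodule.linearMap_qext
      ext f
      simp only [LinearMap.comp_apply, Submodule.mkQ_apply, H1Map_mk, LinearMap.id_comp]
      congr 1
      exact Subtype.ext (funext fun g => e.apply_symm_apply _))
    (by
      apply Submodule.linearMap_qext
      ext f
      simp only [LinearMap.comp_apply, Submodule.mkQ_apply, H1Map_mk, LinearMap.id_comp]
      congr 1
      exact Subtype.ext (funext fun g => e.symm_apply_apply _))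

end maps

section prod
variable {A P : Type} [AddCommGroup A] [Module k A] [AddCommGroup P] [Module k P]

/-- The product of two representations. -/
def prodRep (ρA : Representation k G A) (ρP : Representation k G P) :
    Representation k G (A × P) where
  toFun g := (ρA g).prodMap (ρP g)
  map_one' := by ext x <;> simp
  map_mul' g h := by ext x <;> simp

@[simp] lemma prodRep_apply (ρA : Representation k G A) (ρP : Representation k G P)
    (g : G) (x : A × P) : prodRep ρA ρP g x = (ρA g x.1, ρP g x.2) := rfl

variable (ρA : Representation k G A) (ρP : Representation k G P)

/-- If every 1-cocycle of the second factor is a coboundary, H¹ of a product is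
H¹ of the first factor. -/
noncomputable def H1EquivProd
    (hvan : ∀ f ∈ cocycles₁ (Rep.of ρP), ∃ x : P, ∀ g : G, ρP g x - x = f g) :
    H1q (Rep.of (prodRep ρA ρP)) ≃ₗ[k] H1q (Rep.of ρA) := by
  have hfst : ∀ (g : G) (a : A × P),
      (LinearMap.fst k A P) (prodRep ρA ρP g a) = ρA g ((LinearMap.fst k A P) a) :=
    fun g a => rfl
  have hinl : ∀ (g : G) (a : A),
      (LinearMap.inl k A P) (ρA g a) = prodRep ρA ρP g ((LinearMap.inl k A P) a) :=
    fun g a => by simp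
  exact LinearEquiv.ofLinear
    (H1Map (Rep.of (prodRep ρA ρP)) (Rep.of ρA) (LinearMap.fst k A P) hfst)
    (H1Map (Rep.of ρA) (Rep.of (prodRep ρA ρP)) (LinearMap.inl k A P) hinl)
    (by
      apply Submodule.linearMap_qext
      ext f
      simp only [LinearMap.comp_apply, Submodule.mkQ_apply, H1Map_mk, LinearMap.id_comp]
      exact congrArg Submodule.Quotient.mk (Subtype.ext (funext fun g => rfl)))
    (by
      apply Submodule.linearMap_qext
      ext f
      simp only [LinearMap.comp_apply, Submodule.mkQ_apply, H1Map_mk, LinearMap.id_comp]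
      rw [Submodule.Quotient.eq]
      have hsnd : (fun g : G => (f.1 g).2) ∈ cocycles₁ (Rep.of ρP) := by
        refine (mem_cocycles₁_iff (A := Rep.of ρP) _).2 fun g h => ?_
        have h1 := (mem_cocycles₁_iff (A := Rep.of (prodRep ρA ρP)) f.1).1 f.2 g h
        exact congrArg Prod.snd h1
      obtain ⟨x, hx⟩ := hvan _ hsnd
      refine (mem_cob_iff (A := Rep.of (prodRep ρA ρP)) _).2
        ⟨((0 : A), -x), fun g => ?_⟩
      have key : ∀ y : A × P, y.2 = ρP g x - x →
          prodRep ρA ρP g ((0 : A), -x) - ((0 : A), -x) = LinearMap.inl k A P y.1 - y := by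
        rintro ⟨y1, y2⟩ rfl
        ext
        · simp
        · simp only [prodRep_apply, map_neg, Prod.snd_sub, LinearMap.inl_apply,
            Prod.snd, Prod.mk.injEq]
          abel_nf
          try simp
          try abel
      exact key (f.1 g) (hx g).symm)

end prod

section perm

variable {W : Type} [Group W] [Finite W] {S : Type} [Fintype S] [MulAction W S]
  {U : Subgroup W}

variable (W S) in
/-- The permutation representation on `S →₀ ℤ`. -/
noncomputable def permRep : Representation ℤ W (S →₀ ℤ) where
  toFun g := (MonoidAlgebra.coeffLinearEquiv ℤ).toLinearMap ∘ₗ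
    Representation.ofMulAction ℤ W S g ∘ₗ (MonoidAlgebra.coeffLinearEquiv ℤ).symm.toLinearMap
  map_one' := by
    apply LinearMap.ext
    intro y
    show (Representation.ofMulAction ℤ W S 1 (MonoidAlgebra.ofCoeff y)).coeff = y
    rw [map_one]
    rfl
  map_mul' g h := by
    apply LinearMap.ext
    intro y
    show (Representation.ofMulAction ℤ W S (g * h) (MonoidAlgebra.ofCoeff y)).coeff =
      (Representation.ofMulAction ℤ W S g (MonoidAlgebra.ofCoeff
        (Representation.ofMulAction ℤ W S h (MonoidAlgebra.ofCoeff y)).coeff)).coeff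
    rw [map_mul]
    rfl

lemma permRep_apply (g : W) (y : S →₀ ℤ) (s : S) : permRep W S g y s = y (g⁻¹ • s) := by
  show (Representation.ofMulAction ℤ W S g (MonoidAlgebra.ofCoeff y)).coeff s = _
  rw [Representation.coeff_ofMulAction]

/-- Every 1-cocycle of a subgroup of a finite group on a finite permutation module
is a coboundary. -/
theorem perm_vanish (f : U → (S →₀ ℤ))
    (hf : ∀ g h : U, f (g * h) = permRep W S (g : W) (f h) + f g) :
    ∃ x : S →₀ ℤ, ∀ u : U, permRep W S (u : W) x - x = f u := by
  classical
  have hcoc : ∀ (u v : U) (s : S), f (u * v) s = f v ((u : W)⁻¹ • s) + f u s := by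
    intro u v s
    rw [hf u v]
    simp [permRep_apply]
  have hone : ∀ s, f 1 s = 0 := by
    intro s
    have h := hcoc 1 1 s
    simp only [mul_one, OneMemClass.coe_one, inv_one, one_smul] at h
    omega
  have hstab : ∀ (h : U) (s₀ : S), (h : W) • s₀ = s₀ → f h s₀ = 0 := by
    intro h s₀ hfix
    have hinv : ((h : W))⁻¹ • s₀ = s₀ := by
      conv_lhs => rw [← hfix]
      simp
    have hpow : ∀ n : ℕ, f (h ^ n) s₀ = n * f h s₀ := by
      intro n
      induction n with
      | zero => simpa using hone s₀
      | succ n ih =>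
        rw [pow_succ', hcoc h (h ^ n) s₀, hinv, ih]
        push_cast; ring
    have hfin := hpow (orderOf h)
    rw [pow_orderOf_eq_one h, hone s₀] at hfin
    have hpos : (orderOf h : ℤ) ≠ 0 := by
      exact_mod_cast (orderOf_pos h).ne'
    exact (mul_eq_zero.1 hfin.symm).resolve_left hpos
  -- choose orbit representatives
  have horb : ∀ s : S, ∃ u : U,
      (u : W) • (Quotient.mk (MulAction.orbitRel U S) s).out = s := by
    intro s
    have h1 : (Quotient.mk (MulAction.orbitRel U S) s).out ∈ MulAction.orbit U s := by
      rw [← MulAction.orbitRel_apply]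
      exact Quotient.mk_out s
    obtain ⟨u, hu⟩ := h1
    exact ⟨u⁻¹, by rw [← hu]; simp [Subgroup.smul_def]⟩
  choose c hc using horb
  set x : S → ℤ := fun s => f (c s) s with hxdef
  have key : ∀ (u : U) (s : S), f u s = x s - x ((u : W)⁻¹ • s) := by
    intro u s
    have hq : Quotient.mk (MulAction.orbitRel U S) ((u : W)⁻¹ • s)
        = Quotient.mk (MulAction.orbitRel U S) s :=
      Quotient.sound (⟨u⁻¹, rfl⟩ : _ ∈ MulAction.orbit U s)
    set s₀ := (Quotient.mk (MulAction.orbitRel U S) s).out with hs₀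
    have hc1 : (c s : W) • s₀ = s := hc s
    have hc2 : (c ((u : W)⁻¹ • s) : W) • s₀ = (u : W)⁻¹ • s := by
      have := hc ((u : W)⁻¹ • s)
      rwa [hq] at this
    set u₁ := c s
    set u₂ := c ((u : W)⁻¹ • s)
    have hfix : ((u₂⁻¹ * (u⁻¹ * u₁) : U) : W) • s₀ = s₀ := by
      push_cast
      rw [mul_smul, mul_smul, hc1, ← hc2]
      simp
    have hzero := hstab _ _ hfix
    have e1 : f u₁ s = f (u⁻¹ * u₁) ((u : W)⁻¹ • s) + f u s := by
      have := hcoc u (u⁻¹ * u₁) s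
      rwa [show u * (u⁻¹ * u₁) = u₁ by group] at this
    have e2 : f (u⁻¹ * u₁) ((u : W)⁻¹ • s)
        = f (u₂⁻¹ * (u⁻¹ * u₁)) ((u₂ : W)⁻¹ • ((u : W)⁻¹ • s)) + f u₂ ((u : W)⁻¹ • s) := by
      have := hcoc u₂ (u₂⁻¹ * (u⁻¹ * u₁)) ((u : W)⁻¹ • s)
      rwa [show u₂ * (u₂⁻¹ * (u⁻¹ * u₁)) = u⁻¹ * u₁ by group] at this
    have e3 : (u₂ : W)⁻¹ • ((u : W)⁻¹ • s) = s₀ := by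
      rw [← hc2]; simp
    rw [e3, hzero, zero_add] at e2
    have : x s = x ((u : W)⁻¹ • s) + f u s := by
      rw [hxdef]
      simp only
      rw [e1, e2]
    omega
  refine ⟨Finsupp.equivFunOnFinite.symm (fun s => -x s), fun u => ?_⟩
  ext s
  rw [Finsupp.sub_apply, permRep_apply]
  simp only [Finsupp.coe_equivFunOnFinite_symm]
  rw [key u s]
  ring

end perm

end Stmt8Aux

namespace Stmt8Aux

/-- Any additive monoid hom commutes with ℤ-scalar multiplication for arbitrary
ℤ-module structures. -/
lemma addHom_int_smul {M M₂ : Type} [AddCommGroup M] [AddCommGroup M₂]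
    [Module ℤ M] [Module ℤ M₂] {F : Type} [FunLike F M M₂] [AddMonoidHomClass F M M₂]
    (f : F) (z : ℤ) (x : M) : f (z • x) = z • f x := by
  have h := map_intCast_smul f ℤ ℤ z x
  simpa using h

/-- Transport an additive equivalence to a linear equivalence over `ℤ` for arbitrary
explicitly-given `ℤ`-module structures. -/
noncomputable def intLE {M M₂ : Type} [AddCommGroup M] [AddCommGroup M₂]
    {i1 : Module ℤ M} {i2 : Module ℤ M₂} (e : M ≃+ M₂) :
    letI := i1; letI := i2; M ≃ₗ[ℤ] M₂ := by
  letI := i1; letI := i2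
  exact AddEquiv.toLinearEquiv e (fun z x => by
    have h := map_intCast_smul e ℤ ℤ z x
    simpa using h)

/-- The main combination: if `A ⊕ P ≅ A' ⊕ P'` equivariantly and the 1-cocycles of
`P`, `P'` are all coboundaries, then `H¹(A) ≅ H¹(A')`. -/
noncomputable def mainEquiv {k G : Type} [CommRing k] [Group G]
    {A P A' P' : Type} [AddCommGroup A] [Module k A] [AddCommGroup P] [Module k P]
    [AddCommGroup A'] [Module k A'] [AddCommGroup P'] [Module k P']
    (ρA : Representation k G A) (ρP : Representation k G P)
    (ρA' : Representation k G A') (ρP' : Representation k G P')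
    (e : (A × P) ≃ₗ[k] (A' × P'))
    (he : ∀ (g : G) (x : A × P), e (prodRep ρA ρP g x) = prodRep ρA' ρP' g (e x))
    (hvan : ∀ f ∈ cocycles₁ (Rep.of ρP), ∃ x : P, ∀ g : G, ρP g x - x = f g)
    (hvan' : ∀ f ∈ cocycles₁ (Rep.of ρP'), ∃ x : P', ∀ g : G, ρP' g x - x = f g) :
    H1q (Rep.of ρA) ≃+ H1q (Rep.of ρA') :=
  (((H1EquivProd ρA ρP hvan).symm.trans
    (H1EquivOfRepEquiv (Rep.of (prodRep ρA ρP)) (Rep.of (prodRep ρA' ρP')) e he)).trans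
    (H1EquivProd ρA' ρP' hvan')).toAddEquiv

end Stmt8Aux

open Stmt8Aux in
theorem stmt8 (W : Type) [Group W] [Finite W]
    (N N' : Type) [AddCommGroup N] [Module ℤ N] [AddCommGroup N'] [Module ℤ N']
    (ρ : Representation ℤ W N) (ρ' : Representation ℤ W N')
    (S S' : Type) [Fintype S] [Fintype S'] [MulAction W S] [MulAction W S']
    (e : (N × (S →₀ ℤ)) ≃ₗ[ℤ] (N' × (S' →₀ ℤ)))
    (he : ∀ (w : W) (x : N) (y : S →₀ ℤ),
      e (ρ w x, (Representation.ofMulAction ℤ W S w (MonoidAlgebra.ofCoeff y)).coeff)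
        = (ρ' w (e (x, y)).1, (Representation.ofMulAction ℤ W S' w (MonoidAlgebra.ofCoeff (e (x, y)).2)).coeff))
    (U : Subgroup W) :
    Nonempty (groupCohomology.H1 (Rep.of (ρ.comp U.subtype)) ≃ₗ[ℤ]
      groupCohomology.H1 (Rep.of (ρ'.comp U.subtype))) := by
  classical
  have E := mainEquiv (ρ.comp U.subtype) ((permRep W S).comp U.subtype)
    (ρ'.comp U.subtype) ((permRep W S').comp U.subtype)
    (intLE e.toAddEquiv)
    (fun g a => he (g : W) a.1 a.2)
    (fun f hf => perm_vanish f fun g h =>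
      (mem_cocycles₁_iff
        (A := Rep.of ((permRep W S).comp U.subtype)) f).1 hf g h)
    (fun f hf => perm_vanish f fun g h =>
      (mem_cocycles₁_iff
        (A := Rep.of ((permRep W S').comp U.subtype)) f).1 hf g h)
  exact ⟨((H1qEquiv _).symm.trans (intLE E)).trans (H1qEquiv _)⟩
end

section
/- Let X be a separated scheme such that every finite set of points of X is contained in some affine open subset (this holds e.g. for quasi-projective varieties), and let G be a finite group acting on X by scheme automorphisms (a group homomorphism ρ : G → Aut(X)). Then every point of X has a G-stable affine open neighborhood: for each x ∈ X there is an open U ⊆ X with x ∈ U, U affine, and ρ(g)(U) = U (as subsets of X) for all g ∈ G. -/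
/-!
STATEMENT 14: Let `X` be a separated scheme in which every finite set of points is
contained in some affine open subset, and let a finite group `G` act on `X` by
scheme automorphisms via `ρ : G → Aut(X)`. Then every point of `X` has a `G`-stable
affine open neighborhood.
-/

open AlgebraicGeometry CategoryTheory

section Aux

open CategoryTheory.Limits MorphismProperty

lemma aux_hasOfPostcomp :
    MorphismProperty.HasOfPostcompProperty
      @AlgebraicGeometry.IsAffineHom @AlgebraicGeometry.IsSeparated := by
  have := AlgebraicGeometry.isAffineHom_isStableUnderBaseChange
  apply (MorphismProperty.hasOfPostcompProperty_iff_le_diagonal (P := @IsAffineHom) (Q := @IsSeparated)).mpr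
  intro A B f hf
  have : IsClosedImmersion (pullback.diagonal f) := hf.diagonal_isClosedImmersion
  show IsAffineHom (pullback.diagonal f)
  infer_instance

/-- In a separated scheme, the inclusion of an affine open is an affine morphism. -/
lemma aux_isAffineHom_ι {X : Scheme} [X.IsSeparated] {V : X.Opens}
    (hV : IsAffineOpen V) : IsAffineHom V.ι := by
  have h1 : AlgebraicGeometry.IsSeparated (terminal.from X) :=
    Scheme.IsSeparated.isSeparated_terminal_from
  have h2 : IsAffineHom (V.ι ≫ terminal.from X) := by
    rw [terminal.comp_from]
    have : IsAffine V.toScheme := hV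
    infer_instance
  exact aux_hasOfPostcomp.of_postcomp V.ι (terminal.from X) h1 h2

/-- In a separated scheme, the intersection of two affine opens is affine. -/
lemma aux_inf_affine {X : Scheme} [X.IsSeparated] {U V : X.Opens}
    (hU : IsAffineOpen U) (hV : IsAffineOpen V) : IsAffineOpen (U ⊓ V) := by
  have : IsAffineHom V.ι := aux_isAffineHom_ι hV
  have h : IsAffineOpen (V.ι ⁻¹ᵁ U) := hU.preimage V.ι
  have := h.image_of_isOpenImmersion V.ι
  rwa [Scheme.Hom.image_preimage_eq_opensRange_inf, V.opensRange_ι, inf_comm] at this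

lemma aux_finset_inf_affine {X : Scheme} [X.IsSeparated] {ι : Type*}
    (s : Finset ι) (hs : s.Nonempty) (f : ι → X.Opens)
    (hf : ∀ i ∈ s, IsAffineOpen (f i)) : IsAffineOpen (s.inf f) := by
  induction hs using Finset.Nonempty.cons_induction with
  | singleton i => simpa using hf i (by simp)
  | cons i s hi hs ih =>
      rw [Finset.inf_cons]
      exact aux_inf_affine (hf i (by simp)) (ih fun j hj => hf j (by simp [hj]))

end Aux

theorem stmt14 (X : Scheme) [X.IsSeparated]
    (hX : ∀ s : Set X, s.Finite → ∃ U : X.Opens, IsAffineOpen U ∧ s ⊆ (U : Set X))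
    (G : Type) [Group G] [Finite G]
    (ρ : G →* Aut X) (x : X) :
    ∃ U : X.Opens, x ∈ U ∧ IsAffineOpen U ∧
      ∀ g : G, (ρ g).hom.base '' (U : Set X) = (U : Set X) := by
  classical
  have := Fintype.ofFinite G
  have hiso : ∀ g : G, IsIso (ρ g).hom := fun g => ⟨⟨(ρ g).inv, (ρ g).hom_inv_id, (ρ g).inv_hom_id⟩⟩
  -- the orbit of `x` is finite, so it is contained in some affine open `V`
  obtain ⟨V, hV, hVsub⟩ := hX (Set.range fun g : G => (ρ g).hom.base x)
    (Set.finite_range _)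
  -- composition rule for the action on points
  have hcomp : ∀ (g h : G) (y : X),
      (ρ g).hom.base ((ρ h).hom.base y) = (ρ (g * h)).hom.base y := by
    intro g h y
    have : (ρ (g * h)).hom = (ρ h).hom ≫ (ρ g).hom := by
      rw [map_mul]; rfl
    rw [this]; simp
  -- the image functions
  let W : G → X.Opens := fun g => (ρ g).hom ''ᵁ V
  have hWset : ∀ g : G, (W g : Set X) = (ρ g).hom.base '' (V : Set X) := fun g => rfl
  have hWaffine : ∀ g : G, IsAffineOpen (W g) := fun g =>
    hV.image_of_isOpenImmersion (ρ g).hom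
  have hcoe : ((Finset.univ.inf W : X.Opens) : Set X) = ⋂ g : G, (W g : Set X) := by
    rw [TopologicalSpace.Opens.coe_finset_inf]
    simp only [Finset.inf_eq_iInf, Finset.mem_univ, iInf_pos, Function.comp]
    rw [Set.iInf_eq_iInter]
  refine ⟨Finset.univ.inf W, ?_, ?_, ?_⟩
  · -- membership
    rw [← SetLike.mem_coe, hcoe, Set.mem_iInter]
    intro g
    show x ∈ (W g : Set X)
    rw [hWset]
    refine ⟨(ρ g⁻¹).hom.base x, hVsub ⟨g⁻¹, rfl⟩, ?_⟩
    rw [hcomp, mul_inv_cancel]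
    have h1 : ρ (1 : G) = 1 := map_one ρ
    rw [h1]; rfl
  · -- affineness
    exact aux_finset_inf_affine _ Finset.univ_nonempty _ fun g _ => hWaffine g
  · -- stability
    intro g
    have hbij : Function.Bijective (ρ g).hom.base := by
      have : IsIso (ρ g).hom := inferInstance
      exact (TopCat.homeoOfIso (Scheme.forgetToTop.mapIso (asIso (ρ g).hom))).bijective
    rw [hcoe, Set.InjOn.image_iInter_eq (hbij.injective.injOn)]
    have hIm : ∀ h : G, (ρ g).hom.base '' (W h : Set X) = (W (g * h) : Set X) := by
      intro h
      rw [hWset, hWset, ← Set.image_comp]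
      exact congrFun (congrArg Set.image (funext (hcomp g h))) _
    calc ⋂ h : G, (ρ g).hom.base '' (W h : Set X)
        = ⋂ h : G, (W (g * h) : Set X) := by
          exact Set.iInter_congr hIm
      _ = ⋂ h : G, (W h : Set X) := by
          exact (Equiv.mulLeft g).surjective.iInter_comp fun h => (W h : Set X)
end
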